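/- arXiv:1701.00552 — 9 statements merged into one kernel-verified Lean document; each statement's English description precedes it below -/
import Mathlib

section
/- Every relatively weakly compact subset of the dual X' of a Banach space X is an L-Dunford-Pettis set. -/
open Filter Topology Metric

noncomputable section

instance : Fact ((1:ENNReal) ≤ ⊤) := ⟨le_top⟩

/-- A sequence is weakly null if every continuous linear functional sends it to a null
sequence. -/
def WeaklyNull {X : Type*} [NormedAddCommGroup X] [NormedSpace ℝ X] (x : ℕ → X) : Prop :=
  ∀ f : X →L[ℝ] ℝ, Tendsto (fun n => f (x n)) atTop (𝓝 0)

/-- A sequence of functionals is weak*-null if it tends to zero pointwise. -/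
def WeakStarNull {X : Type*} [NormedAddCommGroup X] [NormedSpace ℝ X]
    (f : ℕ → X →L[ℝ] ℝ) : Prop :=
  ∀ x : X, Tendsto (fun n => f n x) atTop (𝓝 0)

/-- A norm bounded set is a Dunford-Pettis set if every weakly null sequence of functionals
converges to zero uniformly on it. -/
def IsDPSet {X : Type*} [NormedAddCommGroup X] [NormedSpace ℝ X] (A : Set X) : Prop :=
  Bornology.IsBounded A ∧
  ∀ f : ℕ → X →L[ℝ] ℝ, WeaklyNull f →
    Tendsto (fun n => ⨆ x : A, |f n (x : X)|) atTop (𝓝 0)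

/-- A norm bounded subset of the dual is an L-set if every weakly null sequence in `X`
converges to zero uniformly on it. -/
def IsLSet {X : Type*} [NormedAddCommGroup X] [NormedSpace ℝ X]
    (A : Set (X →L[ℝ] ℝ)) : Prop :=
  Bornology.IsBounded A ∧
  ∀ x : ℕ → X, WeaklyNull x →
    Tendsto (fun n => ⨆ f : A, |(f : X →L[ℝ] ℝ) (x n)|) atTop (𝓝 0)

/-- A norm bounded subset of the dual is an L-Dunford-Pettis set if every weakly null
sequence in `X` which is a Dunford-Pettis set converges to zero uniformly on it. -/
def IsLDPSet {X : Type*} [NormedAddCommGroup X] [NormedSpace ℝ X]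
    (A : Set (X →L[ℝ] ℝ)) : Prop :=
  Bornology.IsBounded A ∧
  ∀ x : ℕ → X, WeaklyNull x → IsDPSet (Set.range x) →
    Tendsto (fun n => ⨆ f : A, |(f : X →L[ℝ] ℝ) (x n)|) atTop (𝓝 0)

/-- A set is relatively weakly compact if its closure in the weak topology is compact. -/
def RelWeaklyCompact {X : Type*} [NormedAddCommGroup X] [NormedSpace ℝ X]
    (A : Set X) : Prop :=
  IsCompact (closure ((toWeakSpace ℝ X) '' A))

/-- The relatively compact Dunford-Pettis property: every Dunford-Pettis set is
relatively norm compact. -/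
def HasDPrcP (X : Type*) [NormedAddCommGroup X] [NormedSpace ℝ X] : Prop :=
  ∀ A : Set X, IsDPSet A → IsCompact (closure A)

/-- An operator is Dunford-Pettis completely continuous if it maps weakly null sequences
that are Dunford-Pettis sets to norm null sequences. -/
def IsDPcc {X Y : Type*} [NormedAddCommGroup X] [NormedSpace ℝ X]
    [NormedAddCommGroup Y] [NormedSpace ℝ Y] (T : X →L[ℝ] Y) : Prop :=
  ∀ x : ℕ → X, WeaklyNull x → IsDPSet (Set.range x) →
    Tendsto (fun n => ‖T (x n)‖) atTop (𝓝 0)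

/-- An operator is weakly compact if the image of the closed unit ball is relatively
weakly compact. -/
def IsWeaklyCompactOp {X Y : Type*} [NormedAddCommGroup X] [NormedSpace ℝ X]
    [NormedAddCommGroup Y] [NormedSpace ℝ Y] (T : X →L[ℝ] Y) : Prop :=
  RelWeaklyCompact (T '' closedBall 0 1)

/-- The L-Dunford-Pettis property: every L-Dunford-Pettis set in the dual is relatively
weakly compact. -/
def HasLDPProperty (X : Type*) [NormedAddCommGroup X] [NormedSpace ℝ X] : Prop :=
  ∀ A : Set (X →L[ℝ] ℝ), IsLDPSet A → RelWeaklyCompact A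

/-- The Dunford-Pettis property: every relatively weakly compact set is a
Dunford-Pettis set. -/
def HasDPProperty (X : Type*) [NormedAddCommGroup X] [NormedSpace ℝ X] : Prop :=
  ∀ A : Set X, RelWeaklyCompact A → IsDPSet A

/-- Grothendieck space: every weak*-null sequence in the dual is weakly null. -/
def IsGrothendieck (X : Type*) [NormedAddCommGroup X] [NormedSpace ℝ X] : Prop :=
  ∀ f : ℕ → X →L[ℝ] ℝ, WeakStarNull f → WeaklyNull f

/-- The space `ℓ∞` of bounded real sequences. -/
abbrev ellInfty : Type := lp (fun _ : ℕ => ℝ) ⊤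

/-!
It suffices that for all `n k → ∞` and `f k ∈ A` some subsequence of `f k (x (n k))` tends to
zero. Relative weak compactness yields a subsequence of `f k` converging weakly to some `f₀` (the
sequential half of Eberlein–Šmulian, which holds because the weak topology is metrizable on weakly
compact subsets of a separable subspace: countably many functionals separate its points). Then
`f k - f₀` is a weakly null sequence in `X'`, hence tends to zero uniformly on the
Dunford–Pettis set `{x n}`, while `f₀ (x n) → 0` since `x` is weakly null.
-/

open Set

section WeakSequentialCompactness

variable {E : Type*} [NormedAddCommGroup E] [NormedSpace ℝ E]

theorem continuous_weakSpace_apply (φ : StrongDual ℝ E) :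
    Continuous fun w : WeakSpace ℝ E => φ ((toWeakSpace ℝ E).symm w) :=
  WeakBilin.eval_continuous _ φ

theorem RelWeaklyCompact.isBounded {A : Set E} (hA : RelWeaklyCompact A) :
    Bornology.IsBounded A := by
  have hpointwise : ∀ φ : StrongDual ℝ E, ∃ C, ∀ a : A,
      ‖NormedSpace.inclusionInDoubleDual ℝ E a φ‖ ≤ C := by
    intro φ
    obtain ⟨C, hC⟩ := (hA.image (continuous_weakSpace_apply φ)).isBounded.exists_norm_le
    exact ⟨C, fun a => hC _ ⟨_, subset_closure (mem_image_of_mem _ a.2), rfl⟩⟩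
  obtain ⟨C, hC⟩ := banach_steinhaus hpointwise
  refine isBounded_iff_forall_norm_le.mpr ⟨C, fun a ha => ?_⟩
  rw [← (NormedSpace.inclusionInDoubleDualLi ℝ).norm_map a]
  exact hC ⟨a, ha⟩

theorem TopologicalSpace.IsSeparable.exists_separating_dual_seq {S : Set E}
    (hS : TopologicalSpace.IsSeparable S) :
    ∃ φ : ℕ → StrongDual ℝ E, ∀ y ∈ S, (∀ m, φ m y = 0) → y = 0 := by
  obtain ⟨c, hc, hSc⟩ := hS
  obtain ⟨g, hg⟩ := (hc.insert 0).exists_eq_range (insert_nonempty 0 c)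
  choose φ hφ_norm hφ_apply using fun m => exists_dual_vector'' ℝ (g m)
  refine ⟨φ, fun y hy hφy => ?_⟩
  have hy' : y ∈ closure (range g) := hg ▸ closure_mono (subset_insert 0 c) (hSc hy)
  -- A `g m` close to `y ≠ 0` would satisfy `‖g m‖ = φ m (g m - y) ≤ ‖y - g m‖`, which is small.
  by_contra hy0
  have hpos : 0 < ‖y‖ := norm_pos_iff.mpr hy0
  obtain ⟨_, ⟨m, rfl⟩, hm⟩ := Metric.mem_closure_iff.mp hy' (‖y‖ / 2) (by linarith)
  rw [dist_eq_norm] at hm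
  have hgm : ‖g m‖ ≤ ‖y - g m‖ := by
    calc ‖g m‖ = φ m (g m - y) := by simp [hφ_apply, hφy]
      _ ≤ ‖φ m (g m - y)‖ := Real.le_norm_self _
      _ ≤ ‖φ m‖ * ‖g m - y‖ := (φ m).le_opNorm _
      _ ≤ ‖y - g m‖ := by
        rw [norm_sub_rev]
        exact mul_le_of_le_one_left (norm_nonneg _) (hφ_norm m)
  linarith [norm_le_insert' y (g m)]

theorem IsCompact.metrizableSpace_of_subset_separable {K : Set (WeakSpace ℝ E)}
    (hK : IsCompact K) {Y : Submodule ℝ E} (hY : TopologicalSpace.IsSeparable (Y : Set E))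
    (hKY : K ⊆ toWeakSpace ℝ E '' Y) : TopologicalSpace.MetrizableSpace K := by
  obtain ⟨φ, hφ⟩ := hY.exists_separating_dual_seq
  -- `Φ` is a continuous injection of the compact space `K` into the metrizable `ℕ → ℝ`.
  have := isCompact_iff_compactSpace.mp hK
  let Φ : K → ℕ → ℝ := fun w m => φ m ((toWeakSpace ℝ E).symm w)
  have hΦ_cont : Continuous Φ :=
    continuous_pi fun m => (continuous_weakSpace_apply (φ m)).comp continuous_subtype_val
  have hΦ_inj : Function.Injective Φ := by
    rintro ⟨s, hs⟩ ⟨t, ht⟩ hst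
    obtain ⟨a, ha, rfl⟩ := hKY hs
    obtain ⟨b, hb, rfl⟩ := hKY ht
    have hab : a - b = 0 :=
      hφ _ (Y.sub_mem ha hb) fun m => by simpa [Φ, sub_eq_zero] using congrFun hst m
    exact Subtype.ext (congrArg (toWeakSpace ℝ E) (sub_eq_zero.mp hab))
  exact (hΦ_cont.isClosedEmbedding hΦ_inj).isEmbedding.metrizableSpace

theorem RelWeaklyCompact.exists_tendsto_subseq {A : Set E} (hA : RelWeaklyCompact A)
    {u : ℕ → E} (hu : ∀ n, u n ∈ A) :
    ∃ a : E, ∃ ψ : ℕ → ℕ, StrictMono ψ ∧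
      Tendsto (fun j => toWeakSpace ℝ E (u (ψ j))) atTop (𝓝 (toWeakSpace ℝ E a)) := by
  set Y := (Submodule.span ℝ (range u)).topologicalClosure
  have hY : TopologicalSpace.IsSeparable (Y : Set E) := by
    rw [Submodule.topologicalClosure_coe]
    exact (countable_range u).isSeparable.span.closure
  set K := closure (toWeakSpace ℝ E '' (A ∩ Y))
  have hK : IsCompact K :=
    hA.of_isClosed_subset isClosed_closure (closure_mono (image_mono inter_subset_left))
  have hKY : K ⊆ toWeakSpace ℝ E '' Y := by
    rw [← (Submodule.isClosed_topologicalClosure _).closure_eq, Y.convex.toWeakSpace_closure ℝ]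
    exact closure_mono (image_mono inter_subset_right)
  have := hK.metrizableSpace_of_subset_separable hY hKY
  have := isCompact_iff_compactSpace.mp hK
  have huK : ∀ n, toWeakSpace ℝ E (u n) ∈ K := fun n =>
    subset_closure ⟨u n, ⟨hu n, Submodule.le_topologicalClosure _
      (Submodule.subset_span (mem_range_self n))⟩, rfl⟩
  obtain ⟨w, ψ, hψ, hconv⟩ := CompactSpace.tendsto_subseq fun n => (⟨_, huK n⟩ : K)
  refine ⟨(toWeakSpace ℝ E).symm w, ψ, hψ, ?_⟩
  rw [LinearEquiv.apply_symm_apply]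
  exact (continuous_subtype_val.tendsto w).comp hconv

theorem weaklyNull_sub_of_tendsto {u : ℕ → E} {a : E}
    (h : Tendsto (fun n => toWeakSpace ℝ E (u n)) atTop (𝓝 (toWeakSpace ℝ E a))) :
    WeaklyNull fun n => u n - a := fun φ => by
  simpa using (((continuous_weakSpace_apply φ).tendsto _).comp h).sub_const (φ a)

end WeakSequentialCompactness

theorem IsDPSet.tendsto_apply {X : Type*} [NormedAddCommGroup X] [NormedSpace ℝ X]
    {B : Set X} (hB : IsDPSet B) {f : ℕ → X →L[ℝ] ℝ} (hf : WeaklyNull f) {y : ℕ → X}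
    (hy : ∀ n, y n ∈ B) : Tendsto (fun n => f n (y n)) atTop (𝓝 0) := by
  obtain ⟨M, hM⟩ := isBounded_iff_forall_norm_le.mp hB.1
  rw [tendsto_zero_iff_abs_tendsto_zero]
  refine squeeze_zero (fun n => abs_nonneg _) (fun n => ?_) (hB.2 f hf)
  refine le_ciSup (f := fun b : B => |f n b|) ⟨‖f n‖ * M, ?_⟩ ⟨y n, hy n⟩
  rintro _ ⟨b, rfl⟩
  exact (f n).le_opNorm_of_le (hM b b.2)

theorem tendsto_iSup_abs_of_forall_subseq {ι : Type*} (g : ℕ → ι → ℝ)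
    (h : ∀ (n : ℕ → ℕ) (i : ℕ → ι), Tendsto n atTop atTop →
      ∃ ψ : ℕ → ℕ, StrictMono ψ ∧ Tendsto (fun j => g (n (ψ j)) (i (ψ j))) atTop (𝓝 0)) :
    Tendsto (fun n => ⨆ i, |g n i|) atTop (𝓝 0) := by
  rcases isEmpty_or_nonempty ι with hι | hι
  · simp [Real.iSup_of_isEmpty]
  refine tendsto_of_subseq_tendsto fun n hn => ?_
  have hnear : ∀ k : ℕ, ∃ i, (⨆ i, |g (n k) i|) - 1 / (k + 1) < |g (n k) i| := fun k =>
    exists_lt_of_lt_ciSup (sub_lt_self _ Nat.one_div_pos_of_nat)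
  choose i hi using hnear
  obtain ⟨ψ, hψ, hgψ⟩ := h n i hn
  have hbound : Tendsto (fun j => |g (n (ψ j)) (i (ψ j))| + 1 / ((ψ j : ℝ) + 1)) atTop (𝓝 0) := by
    simpa using hgψ.abs.add (tendsto_one_div_add_atTop_nhds_zero_nat.comp hψ.tendsto_atTop)
  exact ⟨ψ, squeeze_zero (fun j => Real.iSup_nonneg fun _ => abs_nonneg _)
    (fun j => by linarith [hi (ψ j)]) hbound⟩

theorem stmt3_general {X : Type*} [NormedAddCommGroup X] [NormedSpace ℝ X]
    (A : Set (X →L[ℝ] ℝ)) (hA : RelWeaklyCompact A) :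
    IsLDPSet A := by
  refine ⟨hA.isBounded, fun x hx hDP => ?_⟩
  refine tendsto_iSup_abs_of_forall_subseq (fun n (f : A) => (f : X →L[ℝ] ℝ) (x n))
    fun n f hn => ?_
  obtain ⟨f₀, ψ, hψ, hconv⟩ := hA.exists_tendsto_subseq fun k => (f k).2
  have hdiff := hDP.tendsto_apply (weaklyNull_sub_of_tendsto hconv)
    fun j => mem_range_self (n (ψ j))
  have hlim := (hx f₀).comp (hn.comp hψ.tendsto_atTop)
  exact ⟨ψ, hψ, by simpa using hdiff.add hlim⟩

theorem stmt3 {X : Type*} [NormedAddCommGroup X] [NormedSpace ℝ X] [CompleteSpace X]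
    (A : Set (X →L[ℝ] ℝ)) (hA : RelWeaklyCompact A) :
    IsLDPSet A :=
  stmt3_general A hA
end
end

section
/- The absolutely closed convex hull of an L-Dunford-Pettis set in the dual X' of a Banach space X is an L-Dunford-Pettis set. -/
open Filter Topology Metric

noncomputable section

/-- The set of absolutely convex combinations of elements of `A`. -/
def absConvexCombos {X : Type*} [NormedAddCommGroup X] [NormedSpace ℝ X] (A : Set X) :
    Set X :=
  {y | ∃ (n : ℕ) (v : Fin n → X) (lam : Fin n → ℝ),
    (∀ i, v i ∈ A) ∧ (∑ i, |lam i|) ≤ 1 ∧ y = ∑ i, lam i • v i}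

/-! A continuous seminorm bounded by `c ≥ 0` on `A` stays bounded by `c` on the closure of
the absolutely convex combinations of `A`, since its sublevel set `{p ≤ c}` is closed and
absolutely convex. For the norm this makes the hull bounded; for the seminorms
`f ↦ |f (x n)|` it dominates the sup over the hull by the sup over `A`, so uniform
convergence on `A` passes to the hull. -/

section AbsConvexCombos

variable {E : Type*} [NormedAddCommGroup E] [NormedSpace ℝ E]

theorem Seminorm.le_of_mem_absConvexCombos (p : Seminorm ℝ E) {A : Set E} {c : ℝ}
    (hc : 0 ≤ c) (hA : ∀ a ∈ A, p a ≤ c) {y : E} (hy : y ∈ absConvexCombos A) : p y ≤ c := by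
  obtain ⟨n, v, lam, hv, hlam, rfl⟩ := hy
  calc p (∑ i, lam i • v i)
      ≤ ∑ i, p (lam i • v i) :=
        Finset.le_sum_of_subadditive p (map_zero p).le (map_add_le_add p) _ _
    _ = ∑ i, |lam i| * p (v i) := by simp only [map_smul_eq_mul, Real.norm_eq_abs]
    _ ≤ ∑ i, |lam i| * c := by gcongr with i; exact hA _ (hv i)
    _ = (∑ i, |lam i|) * c := (Finset.sum_mul _ _ _).symm
    _ ≤ c := mul_le_of_le_one_left hc hlam

theorem Seminorm.le_of_mem_closure_absConvexCombos (p : Seminorm ℝ E) (hp : Continuous p)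
    {A : Set E} {c : ℝ} (hc : 0 ≤ c) (hA : ∀ a ∈ A, p a ≤ c) {y : E}
    (hy : y ∈ closure (absConvexCombos A)) : p y ≤ c :=
  closure_minimal (fun _ => p.le_of_mem_absConvexCombos hc hA)
    (isClosed_le hp continuous_const) hy

theorem Bornology.IsBounded.closure_absConvexCombos {A : Set E} (hA : Bornology.IsBounded A) :
    Bornology.IsBounded (closure (absConvexCombos A)) := by
  obtain ⟨M, hM⟩ := hA.subset_closedBall 0
  refine isBounded_closedBall (x := (0 : E)) (r := max M 0) |>.subset fun y hy => ?_
  rw [mem_closedBall_zero_iff]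
  refine (normSeminorm ℝ E).le_of_mem_closure_absConvexCombos continuous_norm
    (le_max_right _ _) (fun a ha => ?_) hy
  exact (mem_closedBall_zero_iff.1 (hM ha)).trans (le_max_left _ _)

end AbsConvexCombos

section Dual

variable {X : Type*} [NormedAddCommGroup X] [NormedSpace ℝ X]

def evalSeminorm (x : X) : Seminorm ℝ (X →L[ℝ] ℝ) :=
  (normSeminorm ℝ ℝ).comp (ContinuousLinearMap.apply ℝ ℝ x).toLinearMap

theorem bddAbove_range_abs_apply {A : Set (X →L[ℝ] ℝ)} (hA : Bornology.IsBounded A) (x : X) :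
    BddAbove (Set.range fun f : A => |(f : X →L[ℝ] ℝ) x|) := by
  obtain ⟨M, hM⟩ := hA.subset_closedBall 0
  refine ⟨M * ‖x‖, ?_⟩
  rintro _ ⟨f, rfl⟩
  calc |(f : X →L[ℝ] ℝ) x| ≤ ‖(f : X →L[ℝ] ℝ)‖ * ‖x‖ := (f : X →L[ℝ] ℝ).le_opNorm x
    _ ≤ M * ‖x‖ := by gcongr; exact mem_closedBall_zero_iff.1 (hM f.2)

theorem iSup_abs_apply_closure_absConvexCombos_le {A : Set (X →L[ℝ] ℝ)}
    (hA : Bornology.IsBounded A) (x : X) :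
    ⨆ g : closure (absConvexCombos A), |(g : X →L[ℝ] ℝ) x| ≤ ⨆ f : A, |(f : X →L[ℝ] ℝ) x| := by
  have hsup_nonneg : 0 ≤ ⨆ f : A, |(f : X →L[ℝ] ℝ) x| :=
    Real.iSup_nonneg fun _ => abs_nonneg _
  refine Real.iSup_le (fun g => ?_) hsup_nonneg
  exact (evalSeminorm x).le_of_mem_closure_absConvexCombos
    ((ContinuousLinearMap.apply ℝ ℝ x).continuous.abs) hsup_nonneg
    (fun f hf => le_ciSup (bddAbove_range_abs_apply hA x) ⟨f, hf⟩) g.2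

end Dual

theorem stmt4_general {X : Type*} [NormedAddCommGroup X] [NormedSpace ℝ X]
    (A : Set (X →L[ℝ] ℝ)) (hA : IsLDPSet A) :
    IsLDPSet (closure (absConvexCombos A)) := by
  obtain ⟨hA_bdd, hA_lim⟩ := hA
  refine ⟨hA_bdd.closure_absConvexCombos, fun x hx hDP => ?_⟩
  exact tendsto_of_tendsto_of_tendsto_of_le_of_le tendsto_const_nhds (hA_lim x hx hDP)
    (fun n => Real.iSup_nonneg fun _ => abs_nonneg _)
    (fun n => iSup_abs_apply_closure_absConvexCombos_le hA_bdd (x n))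

theorem stmt4 {X : Type*} [NormedAddCommGroup X] [NormedSpace ℝ X] [CompleteSpace X]
    (A : Set (X →L[ℝ] ℝ)) (hA : IsLDPSet A) :
    IsLDPSet (closure (absConvexCombos A)) :=
  stmt4_general A hA
end
end

section
/- If a Banach space X has the L-Dunford-Pettis property, then for every Banach space Y, every Dunford-Pettis completely continuous operator T: X → Y is weakly compact. -/
open Filter Topology Metric

noncomputable section

/-!
The adjoint `T*` maps the dual unit ball onto an L-Dunford-Pettis set: for a weakly null
Dunford-Pettis sequence `(xₙ)`, `sup_{‖g‖ ≤ 1} |g (T xₙ)| ≤ ‖T xₙ‖ → 0` since `T` is DPcc.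
So `T*` is weakly compact, and the theorem reduces to one half of Gantmacher's theorem.

An operator `S : E → F` is weakly compact iff `S**` maps `E''` into `F` (Goldstine and
Banach-Alaoglu, together with the weak*-continuity of `S**`). Applied to `S = T*`, this says
that `T***` maps `Y'''` into `X'`, i.e. `T**` is weak*-to-weak continuous. Since `Y` is complete,
`Y` is norm closed, hence weakly closed, in `Y''` (Mazur), and Goldstine gives `T** X'' ⊆ Y`.
-/

open NormedSpace Set

section

variable {V : Type*} [NormedAddCommGroup V] [NormedSpace ℝ V]

instance : LocallyConvexSpace ℝ (WeakDual ℝ V) :=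
  (WeakDual.withSeminorms ℝ V).toLocallyConvexSpace

theorem WeakDual.exists_eq_eval (f : WeakDual ℝ V →L[ℝ] ℝ) :
    ∃ v : V, ∀ ψ : WeakDual ℝ V, f ψ = ψ v := by
  have hsurj := LinearMap.dualEmbedding_surjective (𝕜 := ℝ) (E := StrongDual ℝ V) (F := V)
    (topDualPairing ℝ V)
  obtain ⟨v, hv⟩ := hsurj f
  exact ⟨v, fun ψ => (DFunLike.congr_fun hv ψ).symm⟩

theorem ContinuousLinearMap.norm_le_of_forall_closedBall_lt {f : StrongDual ℝ V} {u : ℝ}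
    (hf : ∀ x ∈ closedBall (0 : V) 1, f x < u) : ‖f‖ ≤ u := by
  have hu : 0 ≤ u := by simpa using (hf 0 (mem_closedBall_self zero_le_one)).le
  refine f.opNorm_le_of_unit_norm hu fun x hx => abs_le.2 ⟨?_, ?_⟩
  · have := hf (-x) (by simp [hx])
    rw [map_neg] at this
    linarith
  · exact (hf x (by simp [hx])).le

theorem Submodule.mem_of_forall_norm_le_one {p : Submodule ℝ V} (h : ∀ x : V, ‖x‖ ≤ 1 → x ∈ p)
    (x : V) : x ∈ p := by
  have hball : ball (0 : V) 1 ⊆ p := fun y hy => h y (mem_ball_zero_iff.1 hy).le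
  rw [p.eq_top_of_nonempty_interior'
    ⟨0, mem_interior.2 ⟨_, hball, isOpen_ball, mem_ball_self one_pos⟩⟩]
  exact Submodule.mem_top

/-- **Goldstine's theorem**. -/
theorem NormedSpace.toWeakDual_mem_closure_image_closedBall {Φ : StrongDual ℝ (StrongDual ℝ V)}
    (hΦ : ‖Φ‖ ≤ 1) :
    StrongDual.toWeakDual Φ ∈
      closure (inclusionInDoubleDualWeak ℝ V '' (toWeakSpace ℝ V '' closedBall 0 1)) := by
  by_contra hΦC
  have hconv : Convex ℝ (inclusionInDoubleDualWeak ℝ V '' (toWeakSpace ℝ V '' closedBall 0 1)) :=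
    ((convex_closedBall (0 : V) 1).linear_image _).linear_image _
  obtain ⟨f, u, hfu, hΦu⟩ := geometric_hahn_banach_closed_point hconv.closure isClosed_closure hΦC
  obtain ⟨g, hfg⟩ := WeakDual.exists_eq_eval f
  have hgu : ‖g‖ ≤ u := ContinuousLinearMap.norm_le_of_forall_closedBall_lt fun x hx => by
    have := hfu _ (subset_closure ⟨_, ⟨x, hx, rfl⟩, rfl⟩)
    rwa [hfg] at this
  have : Φ g ≤ u := calc
    Φ g ≤ ‖Φ‖ * ‖g‖ := (le_abs_self _).trans (Φ.le_opNorm g)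
    _ ≤ 1 * u := by gcongr
    _ = u := one_mul u
  rw [hfg] at hΦu
  exact this.not_gt hΦu

theorem isCompact_closure_inclusionInDoubleDualWeak_image_closedBall :
    IsCompact (closure (inclusionInDoubleDualWeak ℝ V '' (toWeakSpace ℝ V '' closedBall 0 1))) := by
  refine (WeakDual.isCompact_closedBall 0 1).of_isClosed_subset isClosed_closure
    (closure_minimal ?_ (WeakDual.isClosed_closedBall 0 1))
  rintro _ ⟨_, ⟨x, hx, rfl⟩, rfl⟩
  rw [mem_preimage, mem_closedBall_zero_iff]
  exact (double_dual_bound ℝ V x).trans (mem_closedBall_zero_iff.1 hx)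

end

namespace ContinuousLinearMap

variable {E F : Type*} [NormedAddCommGroup E] [NormedSpace ℝ E]
  [NormedAddCommGroup F] [NormedSpace ℝ F]

def dualMap (S : E →L[ℝ] F) : StrongDual ℝ F →L[ℝ] StrongDual ℝ E :=
  (ContinuousLinearMap.compL ℝ E F ℝ).flip S

theorem continuous_toWeakDual_dualMap (S : E →L[ℝ] F) :
    Continuous fun ψ : WeakDual ℝ F =>
      StrongDual.toWeakDual (S.dualMap (WeakDual.toStrongDual ψ)) :=
  WeakDual.continuous_of_continuous_eval fun x => WeakDual.eval_continuous (S x)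

end ContinuousLinearMap

section Gantmacher

variable {E F : Type*} [NormedAddCommGroup E] [NormedSpace ℝ E]
  [NormedAddCommGroup F] [NormedSpace ℝ F]

theorem IsWeaklyCompactOp.dualMap_dualMap_mem_range {S : E →L[ℝ] F} (hS : IsWeaklyCompactOp S)
    (Φ : StrongDual ℝ (StrongDual ℝ E)) :
    S.dualMap.dualMap Φ ∈ range (inclusionInDoubleDual ℝ F) := by
  refine Submodule.mem_of_forall_norm_le_one
    (p := (inclusionInDoubleDual ℝ F).toLinearMap.range.comap S.dualMap.dualMap.toLinearMap)
    (fun Φ hΦ => ?_) Φ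
  have hK : IsClosed
      (inclusionInDoubleDualWeak ℝ F '' closure (toWeakSpace ℝ F '' (S '' closedBall 0 1))) :=
    (hS.image (inclusionInDoubleDualWeak ℝ F).continuous).isClosed
  have hmaps : MapsTo (fun ψ => StrongDual.toWeakDual (S.dualMap.dualMap (WeakDual.toStrongDual ψ)))
      (inclusionInDoubleDualWeak ℝ E '' (toWeakSpace ℝ E '' closedBall 0 1))
      (inclusionInDoubleDualWeak ℝ F '' closure (toWeakSpace ℝ F '' (S '' closedBall 0 1))) := by
    rintro _ ⟨_, ⟨x, hx, rfl⟩, rfl⟩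
    exact ⟨_, subset_closure ⟨_, ⟨x, hx, rfl⟩, rfl⟩, rfl⟩
  obtain ⟨w, -, hw⟩ := hmaps.closure_left S.dualMap.continuous_toWeakDual_dualMap hK
    (NormedSpace.toWeakDual_mem_closure_image_closedBall hΦ)
  refine ⟨(toWeakSpace ℝ F).symm w, ?_⟩
  ext g
  exact DFunLike.congr_fun hw g

theorem isWeaklyCompactOp_of_dualMap_dualMap_mem_range {S : E →L[ℝ] F}
    (hS : ∀ φ, S.dualMap.dualMap φ ∈ range (inclusionInDoubleDual ℝ F)) :
    IsWeaklyCompactOp S := by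
  refine NormedSpace.isCompact_closure_of_isBounded ℝ F _ ?_ ?_
  · rw [(toWeakSpace ℝ F).injective.preimage_image]
    exact S.lipschitz.isBounded_image isBounded_closedBall
  · calc closure (inclusionInDoubleDualWeak ℝ F '' (toWeakSpace ℝ F '' (S '' closedBall 0 1)))
        ⊆ (fun ψ => StrongDual.toWeakDual (S.dualMap.dualMap (WeakDual.toStrongDual ψ))) ''
            closure (inclusionInDoubleDualWeak ℝ E '' (toWeakSpace ℝ E '' closedBall 0 1)) := by
          refine closure_minimal ?_
            (isCompact_closure_inclusionInDoubleDualWeak_image_closedBall.image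
              S.dualMap.continuous_toWeakDual_dualMap).isClosed
          rintro _ ⟨_, ⟨_, ⟨x, hx, rfl⟩, rfl⟩, rfl⟩
          exact ⟨_, subset_closure ⟨_, ⟨x, hx, rfl⟩, rfl⟩, rfl⟩
      _ ⊆ range (inclusionInDoubleDualWeak ℝ F) := by
          rintro _ ⟨φ, -, rfl⟩
          obtain ⟨y, hy⟩ := hS (WeakDual.toStrongDual φ)
          exact ⟨toWeakSpace ℝ F y, congrArg StrongDual.toWeakDual hy⟩

theorem IsWeaklyCompactOp.of_dualMap [CompleteSpace F] {T : E →L[ℝ] F}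
    (hT : IsWeaklyCompactOp T.dualMap) : IsWeaklyCompactOp T := by
  have hcont : Continuous fun φ : WeakDual ℝ (StrongDual ℝ E) =>
      toWeakSpace ℝ _ (T.dualMap.dualMap (WeakDual.toStrongDual φ)) := by
    refine WeakBilin.continuous_of_continuous_eval _ fun Φ => ?_
    obtain ⟨h, hh⟩ := hT.dualMap_dualMap_mem_range Φ
    convert WeakDual.eval_continuous h using 1
    ext φ
    exact (DFunLike.congr_fun hh (WeakDual.toStrongDual φ)).symm
  have hrange : IsClosed (toWeakSpace ℝ _ '' range (inclusionInDoubleDual ℝ F)) := by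
    have hconv : Convex ℝ (range (inclusionInDoubleDual ℝ F)) :=
      LinearMap.coe_range (inclusionInDoubleDual ℝ F).toLinearMap ▸ Submodule.convex _
    rw [← (inclusionInDoubleDualLi ℝ (E := F)).isometry.isClosedEmbedding.isClosed_range.closure_eq,
      hconv.toWeakSpace_closure ℝ]
    exact isClosed_closure
  refine isWeaklyCompactOp_of_dualMap_dualMap_mem_range fun φ => Submodule.mem_of_forall_norm_le_one
    (p := (inclusionInDoubleDual ℝ F).toLinearMap.range.comap T.dualMap.dualMap.toLinearMap)
    (fun φ hφ => ?_) φ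
  have hmaps : MapsTo (fun φ : WeakDual ℝ (StrongDual ℝ E) =>
      toWeakSpace ℝ _ (T.dualMap.dualMap (WeakDual.toStrongDual φ)))
      (inclusionInDoubleDualWeak ℝ E '' (toWeakSpace ℝ E '' closedBall 0 1))
      (toWeakSpace ℝ _ '' range (inclusionInDoubleDual ℝ F)) := by
    rintro _ ⟨_, ⟨x, -, rfl⟩, rfl⟩
    exact ⟨_, ⟨T x, rfl⟩, rfl⟩
  obtain ⟨_, ⟨y, rfl⟩, hy⟩ := hmaps.closure_left hcont hrange
    (NormedSpace.toWeakDual_mem_closure_image_closedBall hφ)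
  exact ⟨y, (toWeakSpace ℝ _).injective hy⟩

end Gantmacher

theorem IsDPcc.isLDPSet_dualMap_image_closedBall {E F : Type*} [NormedAddCommGroup E]
    [NormedSpace ℝ E] [NormedAddCommGroup F] [NormedSpace ℝ F] {T : E →L[ℝ] F} (hT : IsDPcc T) :
    IsLDPSet (T.dualMap '' closedBall 0 1) := by
  refine ⟨T.dualMap.lipschitz.isBounded_image isBounded_closedBall, fun x hx hxDP => ?_⟩
  refine squeeze_zero (fun n => Real.iSup_nonneg fun _ => abs_nonneg _)
    (fun n => Real.iSup_le (fun f => ?_) (norm_nonneg _)) (hT x hx hxDP)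
  obtain ⟨_, ⟨g, hg, rfl⟩⟩ := f
  calc |g (T (x n))| ≤ ‖g‖ * ‖T (x n)‖ := g.le_opNorm (T (x n))
    _ ≤ 1 * ‖T (x n)‖ := by gcongr; exact mem_closedBall_zero_iff.1 hg
    _ = ‖T (x n)‖ := one_mul _

theorem stmt8_general {X : Type*} [NormedAddCommGroup X] [NormedSpace ℝ X]
    (hX : HasLDPProperty X) :
    ∀ (Y : Type) [NormedAddCommGroup Y] [NormedSpace ℝ Y] [CompleteSpace Y],
      ∀ T : X →L[ℝ] Y, IsDPcc T → IsWeaklyCompactOp T :=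
  fun _ _ _ _ _ hT => IsWeaklyCompactOp.of_dualMap (hX _ hT.isLDPSet_dualMap_image_closedBall)

theorem stmt8 {X : Type*} [NormedAddCommGroup X] [NormedSpace ℝ X] [CompleteSpace X]
    (hX : HasLDPProperty X) :
    ∀ (Y : Type) [NormedAddCommGroup Y] [NormedSpace ℝ Y] [CompleteSpace Y],
      ∀ T : X →L[ℝ] Y, IsDPcc T → IsWeaklyCompactOp T :=
  stmt8_general hX
end
end

section
/- If every Dunford-Pettis completely continuous operator from a Banach space X into ℓ∞ is weakly compact, then X has the L-Dunford-Pettis property. -/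
open Filter Topology Metric

noncomputable section

/-!
Let `A` be an L-Dunford-Pettis set. In the regular space `WeakSpace ℝ X'` it suffices to show that
every ultrafilter `U` containing `A` converges. By Banach-Alaoglu, `U` has a weak* limit `g`; fix
`Φ ∈ X''` with `‖Φ‖ < 1` and let `c` be the limit of `Φ` along `U`. Alternating between `U` and
Helly's lemma, one picks `φₙ ∈ A` and `xₘ` in the unit ball with
`limₘ φₙ xₘ = Φ φₙ → c` and `limₙ φₙ xₘ = g xₘ → Φ g`.
Since `A` is an L-Dunford-Pettis set, `T x = (φₙ x)ₙ : X → ℓ∞` is DPcc, hence weakly compact.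
Then the two iterated limits of the matrix `(φₙ xₘ)` agree, as one sees by evaluating an
ultrafilter-limit functional on `ℓ∞` at a weak cluster point of `(T xₘ)`. So `Φ g = c`.
-/
open Set

theorem isCompact_closure_of_forall_ultrafilter_le_nhds {Y : Type*} [TopologicalSpace Y]
    [RegularSpace Y] {S : Set Y} (h : ∀ U : Ultrafilter Y, S ∈ U → ∃ y, (U : Filter Y) ≤ 𝓝 y) :
    IsCompact (closure S) := by
  refine isCompact_iff_ultrafilter_le_nhds'.2 fun U hU => ?_
  have hUuniv : univ ∈ U := univ_mem
  let OpenMem := {O : Set Y // IsOpen O ∧ O ∈ U}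
  let openTrace : Filter Y := ⨅ O : OpenMem, 𝓟 (S ∩ O.1)
  have : openTrace.NeBot := by
    have : Nonempty OpenMem := ⟨⟨univ, isOpen_univ, hUuniv⟩⟩
    refine iInf_neBot_of_directed' (fun O O' => ⟨⟨O.1 ∩ O'.1, O.2.1.inter O'.2.1,
      inter_mem O.2.2 O'.2.2⟩, ?_, ?_⟩) fun O => principal_neBot_iff.2 ?_
    · exact principal_mono.2 (inter_subset_inter_right _ inter_subset_left)
    · exact principal_mono.2 (inter_subset_inter_right _ inter_subset_right)
    · exact (closure_inter_open_nonempty_iff O.2.1).1 (U.nonempty_of_mem (inter_mem hU O.2.2))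
  let V := Ultrafilter.of openTrace
  have hV : ∀ O, IsOpen O → O ∈ U → S ∩ O ∈ V := fun O hO hOU =>
    Ultrafilter.of_le openTrace (mem_iInf_of_mem ⟨O, hO, hOU⟩ (mem_principal_self _))
  have hSV : S ∈ V := mem_of_superset (hV univ isOpen_univ hUuniv) inter_subset_left
  obtain ⟨y, hy⟩ := h V hSV
  refine ⟨y, mem_closure_iff_ultrafilter.2 ⟨V, hSV, hy⟩, fun W hW => ?_⟩
  obtain ⟨W', hW'y, hW'c, hW'W⟩ := exists_mem_nhds_isClosed_subset hW
  refine mem_of_superset ?_ hW'W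
  by_contra hW'U
  obtain ⟨z, hzW', -, hz⟩ := V.nonempty_of_mem
    (inter_mem (hy hW'y) (hV _ hW'c.isOpen_compl (Ultrafilter.compl_mem_iff_notMem.2 hW'U)))
  exact hz hzW'

theorem tendsto_toWeakSpace_iff {E : Type*} [NormedAddCommGroup E] [NormedSpace ℝ E] {α : Type*}
    {l : Filter α} {f : α → E} {x : E} :
    Tendsto (fun a => toWeakSpace ℝ E (f a)) l (𝓝 (toWeakSpace ℝ E x)) ↔
      ∀ ψ : E →L[ℝ] ℝ, Tendsto (fun a => ψ (f a)) l (𝓝 (ψ x)) :=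
  (show IsInducing fun (w : WeakSpace ℝ E) (ψ : E →L[ℝ] ℝ) => ψ w from ⟨rfl⟩).tendsto_nhds_iff.trans
    tendsto_pi_nhds

theorem exists_forall_tendsto_apply_of_eventually_norm_le {E : Type*} [NormedAddCommGroup E]
    [NormedSpace ℝ E] {α : Type*} (V : Ultrafilter α) (φ : α → E →L[ℝ] ℝ) {C : ℝ}
    (hC : ∀ᶠ a in V, ‖φ a‖ ≤ C) :
    ∃ g : E →L[ℝ] ℝ, ∀ x, Tendsto (fun a => φ a x) V (𝓝 (g x)) := by
  obtain ⟨g, -, hg⟩ := (WeakDual.isCompact_closedBall (𝕜 := ℝ) 0 C).ultrafilter_le_nhds'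
    (V.map fun a => StrongDual.toWeakDual (φ a))
    (by rw [Ultrafilter.mem_map]; filter_upwards [hC] with a ha; simpa using ha)
  refine ⟨WeakDual.toStrongDual g, fun x => ?_⟩
  exact ((WeakDual.eval_continuous x).tendsto g).comp hg

theorem exists_seq_forall_of_exists_next {γ : Type*} (Q : (n : ℕ) → (Fin n → γ) → γ → Prop)
    (h : ∀ n prev, ∃ c, Q n prev c) : ∃ F : ℕ → γ, ∀ n, Q n (fun i => F i) (F n) := by
  choose next hnext using h
  let F : ℕ → γ := Nat.strongRec fun n prev => next n fun i => prev i i.2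
  have hF : ∀ n, F n = next n fun i => F i := Nat.strongRec_eq _
  exact ⟨F, fun n => hF n ▸ hnext _ _⟩

theorem exists_norm_le_forall_abs_apply_sub_lt {E : Type*} [NormedAddCommGroup E]
    [NormedSpace ℝ E] {ι : Type*} [Fintype ι] (Φ : (E →L[ℝ] ℝ) →L[ℝ] ℝ) {r : ℝ} (hΦ : ‖Φ‖ < r)
    (φ : ι → E →L[ℝ] ℝ) {δ : ℝ} (hδ : 0 < δ) :
    ∃ x : E, ‖x‖ ≤ r ∧ ∀ i, |φ i x - Φ (φ i)| < δ := by
  classical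
  have hr : 0 < r := (norm_nonneg Φ).trans_lt hΦ
  let P : E →L[ℝ] ι → ℝ := ContinuousLinearMap.pi φ
  let K := closure (P '' closedBall 0 r)
  suffices hK : (fun i => Φ (φ i)) ∈ K by
    obtain ⟨_, ⟨x, hx, rfl⟩, hxδ⟩ := Metric.mem_closure_iff.1 hK δ hδ
    refine ⟨x, mem_closedBall_zero_iff.1 hx, fun i => ?_⟩
    rw [← Real.dist_eq, dist_comm]
    exact (dist_le_pi_dist _ _ i).trans_lt hxδ
  by_contra hΦK
  obtain ⟨f, u, hfK, hfΦ⟩ := geometric_hahn_banach_closed_point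
    ((convex_closedBall 0 r).linear_image P.toLinearMap).closure isClosed_closure hΦK
  let ζ : E →L[ℝ] ℝ := f.comp P
  have hζ : ∀ x ∈ closedBall (0 : E) r, ζ x < u := fun x hx =>
    hfK _ (subset_closure ⟨x, hx, rfl⟩)
  have hu : 0 < u := by simpa [ζ] using hζ 0 (mem_closedBall_self hr.le)
  have hζnorm : ‖ζ‖ ≤ u / r := by
    refine ContinuousLinearMap.opNorm_bound_of_ball_bound hr u ζ fun x hx => ?_
    have hx' : -x ∈ closedBall (0 : E) r := by simpa using hx
    rw [Real.norm_eq_abs, abs_le]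
    constructor <;> linarith [hζ x hx, hζ (-x) hx', map_neg ζ x]
  have hfΦζ : f (fun i => Φ (φ i)) = Φ ζ := by
    set w : ι → ℝ := fun i => f fun j => if i = j then 1 else 0
    have hf : ∀ v, f v = ∑ i, v i * w i := f.toLinearMap.pi_apply_eq_sum_univ
    have hζ_sum : ζ = ∑ i, w i • φ i := by
      ext x
      simp [ζ, P, hf, mul_comm]
    simp [hf, hζ_sum, mul_comm]
  have : Φ ζ < u := calc
    Φ ζ ≤ ‖Φ‖ * ‖ζ‖ := (le_abs_self _).trans (Φ.le_opNorm ζ)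
    _ ≤ ‖Φ‖ * (u / r) := by gcongr
    _ < r * (u / r) := by gcongr
    _ = u := by field_simp
  linarith

section EllInfty

variable {E : Type*} [NormedAddCommGroup E] [NormedSpace ℝ E]

theorem memℓp_infty_apply {φ : ℕ → E →L[ℝ] ℝ} {C : ℝ} (hφ : ∀ n, ‖φ n‖ ≤ C) (x : E) :
    Memℓp (fun n => φ n x) ⊤ :=
  memℓp_infty ⟨C * ‖x‖, by
    rintro _ ⟨n, rfl⟩
    exact (φ n).le_of_opNorm_le (hφ n) x⟩

def toEllInfty (φ : ℕ → E →L[ℝ] ℝ) {C : ℝ} (hφ : ∀ n, ‖φ n‖ ≤ C) : E →L[ℝ] ellInfty :=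
  LinearMap.mkContinuous
    { toFun := fun x => ⟨fun n => φ n x, memℓp_infty_apply hφ x⟩
      map_add' := fun x y => lp.ext <| funext fun n => map_add (φ n) x y
      map_smul' := fun a x => lp.ext <| funext fun n => map_smul (φ n) a x }
    C fun x => lp.norm_le_of_forall_le (mul_nonneg ((norm_nonneg _).trans (hφ 0)) (norm_nonneg x))
      fun n => (φ n).le_of_opNorm_le (hφ n) x

theorem IsLDPSet.isDPcc_toEllInfty {A : Set (E →L[ℝ] ℝ)} (hA : IsLDPSet A)
    {φ : ℕ → E →L[ℝ] ℝ} (hφA : ∀ n, φ n ∈ A) {C : ℝ} (hφ : ∀ n, ‖φ n‖ ≤ C) :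
    IsDPcc (toEllInfty φ hφ) := by
  obtain ⟨hbdd, hAx⟩ := hA
  obtain ⟨D, hD⟩ := hbdd.exists_norm_le
  intro x hx hxDP
  refine squeeze_zero (fun _ => norm_nonneg _) (fun k => ?_) (hAx x hx hxDP)
  refine lp.norm_le_of_forall_le (Real.iSup_nonneg fun _ => abs_nonneg _) fun n => ?_
  have hbdd : BddAbove (Set.range fun f : A => |(f : E →L[ℝ] ℝ) (x k)|) :=
    ⟨D * ‖x k‖, by
      rintro _ ⟨f, rfl⟩
      exact (f : E →L[ℝ] ℝ).le_of_opNorm_le (hD f f.2) (x k)⟩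
  exact le_ciSup hbdd ⟨φ n, hφA n⟩

end EllInfty

theorem tendsto_of_eventually_abs_sub_lt {u : ℕ → ℝ} {L : ℝ}
    (h : ∀ᶠ n in atTop, |u n - L| < 1 / ((n : ℝ) + 1)) : Tendsto u atTop (𝓝 L) := by
  refine tendsto_iff_dist_tendsto_zero.2 (squeeze_zero' (.of_forall fun _ => dist_nonneg) ?_
    tendsto_one_div_add_atTop_nhds_zero_nat)
  filter_upwards [h] with n hn
  exact (Real.dist_eq _ _).trans_le hn.le

theorem RelWeaklyCompact.eq_of_tendsto_iterated {S : Set ellInfty} (hS : RelWeaklyCompact S)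
    {y : ℕ → ellInfty} (hyS : ∀ m, y m ∈ S) {a b : ℕ → ℝ} {c d : ℝ}
    (ha : ∀ n, Tendsto (fun m => y m n) atTop (𝓝 (a n))) (hac : Tendsto a atTop (𝓝 c))
    (hb : ∀ m, Tendsto (fun n => y m n) atTop (𝓝 (b m))) (hbd : Tendsto b atTop (𝓝 d)) :
    c = d := by
  let V : Ultrafilter ℕ := .of atTop
  have hV : (V : Filter ℕ) ≤ atTop := Ultrafilter.of_le atTop
  obtain ⟨z, -, hz⟩ := hS.ultrafilter_le_nhds' (V.map fun m => toWeakSpace ℝ ellInfty (y m))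
    (Ultrafilter.mem_map.2 (univ_mem' fun m => subset_closure ⟨y m, hyS m, rfl⟩))
  obtain ⟨z, rfl⟩ := (toWeakSpace ℝ ellInfty).surjective z
  have hyz := tendsto_toWeakSpace_iff.1 (Ultrafilter.coe_map _ _ ▸ hz)
  let coord : ℕ → ellInfty →L[ℝ] ℝ := lp.evalCLM ℝ (fun _ => ℝ) ⊤
  obtain ⟨ψ, hψ⟩ := exists_forall_tendsto_apply_of_eventually_norm_le V coord (C := 1)
    (univ_mem' fun _ => LinearMap.mkContinuous_norm_le _ zero_le_one _)
  have hza : (fun n => coord n z) = a :=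
    funext fun n => tendsto_nhds_unique (hyz (coord n)) ((ha n).mono_left hV)
  have hψz : ψ z = c := tendsto_nhds_unique (hψ z) (hza ▸ hac.mono_left hV)
  have hψy : ∀ m, ψ (y m) = b m := fun m => tendsto_nhds_unique (hψ (y m)) ((hb m).mono_left hV)
  exact tendsto_nhds_unique (by simpa [hψz, hψy] using hyz ψ) (hbd.mono_left hV)

section Bidual

variable {X : Type*} [NormedAddCommGroup X] [NormedSpace ℝ X]

theorem exists_seq_interlaced {A : Set (X →L[ℝ] ℝ)} {U : Ultrafilter (X →L[ℝ] ℝ)} (hAU : A ∈ U)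
    {g : X →L[ℝ] ℝ} (hg : ∀ x, Tendsto (fun φ : X →L[ℝ] ℝ => φ x) U (𝓝 (g x)))
    {Φ : (X →L[ℝ] ℝ) →L[ℝ] ℝ} (hΦ : ‖Φ‖ < 1) {c : ℝ} (hc : Tendsto Φ U (𝓝 c)) :
    ∃ (φ : ℕ → X →L[ℝ] ℝ) (x : ℕ → X), (∀ n, φ n ∈ A) ∧ (∀ m, ‖x m‖ ≤ 1) ∧
      (∀ n, Tendsto (fun m => φ n (x m)) atTop (𝓝 (Φ (φ n)))) ∧
      Tendsto (fun n => Φ (φ n)) atTop (𝓝 c) ∧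
      (∀ m, Tendsto (fun n => φ n (x m)) atTop (𝓝 (g (x m)))) ∧
      Tendsto (fun m => g (x m)) atTop (𝓝 (Φ g)) := by
  let ε : ℕ → ℝ := fun n => 1 / ((n : ℝ) + 1)
  have hε : ∀ n, 0 < ε n := fun n => by positivity
  obtain ⟨F, hF⟩ := exists_seq_forall_of_exists_next
    (fun n (prev : Fin n → (X →L[ℝ] ℝ) × X) (next : (X →L[ℝ] ℝ) × X) =>
      next.1 ∈ A ∧ |Φ next.1 - c| < ε n ∧ (∀ i, |next.1 (prev i).2 - g (prev i).2| < ε n) ∧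
      ‖next.2‖ ≤ 1 ∧ |g next.2 - Φ g| < ε n ∧ ∀ i, |(prev i).1 next.2 - Φ (prev i).1| < ε n)
    fun n prev => by
      have hφ : ∀ᶠ φ : X →L[ℝ] ℝ in U, φ ∈ A ∧ |Φ φ - c| < ε n ∧
          ∀ i, |φ (prev i).2 - g (prev i).2| < ε n := by
        have hcn : ∀ᶠ φ in (U : Filter _), |Φ φ - c| < ε n := by
          simpa only [Real.dist_eq] using Metric.tendsto_nhds.1 hc _ (hε n)
        refine (show ∀ᶠ φ in (U : Filter _), φ ∈ A from hAU).and
          (hcn.and (eventually_all.2 fun i => ?_))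
        simpa only [Real.dist_eq] using Metric.tendsto_nhds.1 (hg (prev i).2) _ (hε n)
      obtain ⟨φ, hφ⟩ := hφ.exists
      obtain ⟨x, hx1, hx⟩ := exists_norm_le_forall_abs_apply_sub_lt Φ hΦ
        (fun o : Option (Fin n) => o.elim g fun i => (prev i).1) (hε n)
      exact ⟨(φ, x), hφ.1, hφ.2.1, hφ.2.2, hx1, hx none, fun i => hx (some i)⟩
  refine ⟨fun n => (F n).1, fun n => (F n).2, fun n => (hF n).1, fun n => (hF n).2.2.2.1,
    fun n => ?_, ?_, fun m => ?_, ?_⟩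
  · exact tendsto_of_eventually_abs_sub_lt <|
      (eventually_gt_atTop n).mono fun m hm => (hF m).2.2.2.2.2 ⟨n, hm⟩
  · exact tendsto_of_eventually_abs_sub_lt <| .of_forall fun n => (hF n).2.1
  · exact tendsto_of_eventually_abs_sub_lt <|
      (eventually_gt_atTop m).mono fun n hn => (hF n).2.2.1 ⟨m, hn⟩
  · exact tendsto_of_eventually_abs_sub_lt <| .of_forall fun m => (hF m).2.2.2.2.1

theorem tendsto_bidual_of_isLDPSet
    (hT : ∀ T : X →L[ℝ] ellInfty, IsDPcc T → IsWeaklyCompactOp T) {A : Set (X →L[ℝ] ℝ)}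
    (hA : IsLDPSet A) {U : Ultrafilter (X →L[ℝ] ℝ)} (hAU : A ∈ U) {g : X →L[ℝ] ℝ}
    (hg : ∀ x, Tendsto (fun φ : X →L[ℝ] ℝ => φ x) U (𝓝 (g x))) (Φ : (X →L[ℝ] ℝ) →L[ℝ] ℝ) :
    Tendsto Φ U (𝓝 (Φ g)) := by
  wlog hΦ : ‖Φ‖ < 1 generalizing Φ
  · have hr : 0 < ‖Φ‖ + 1 := by positivity
    have hΦ' : ‖(‖Φ‖ + 1)⁻¹ • Φ‖ < 1 := calc
      _ ≤ ‖(‖Φ‖ + 1)⁻¹‖ * ‖Φ‖ := Φ.opNorm_smul_le _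
      _ < 1 := by
        rw [norm_inv, Real.norm_of_nonneg hr.le, inv_mul_lt_one₀ hr]
        exact lt_add_one _
    simpa [smul_smul, hr.ne'] using (this _ hΦ').const_mul (‖Φ‖ + 1)
  obtain ⟨C, hC⟩ := hA.1.exists_norm_le
  obtain ⟨c, -, hc⟩ := (isCompact_closedBall (0 : ℝ) (‖Φ‖ * C)).ultrafilter_le_nhds' (U.map Φ)
    (Ultrafilter.mem_map.2 <| mem_of_superset hAU fun φ hφ =>
      mem_closedBall_zero_iff.2 (Φ.le_opNorm_of_le (hC φ hφ)))
  rw [Ultrafilter.coe_map] at hc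
  obtain ⟨φ, x, hφA, hx, ha, hac, hb, hbd⟩ := exists_seq_interlaced hAU hg hΦ hc
  have hφC : ∀ n, ‖φ n‖ ≤ C := fun n => hC _ (hφA n)
  have hcg : c = Φ g := (hT _ (hA.isDPcc_toEllInfty hφA hφC)).eq_of_tendsto_iterated
    (fun m => ⟨x m, mem_closedBall_zero_iff.2 (hx m), rfl⟩) ha hac hb hbd
  exact hcg ▸ hc

end Bidual

theorem stmt10_general {X : Type*} [NormedAddCommGroup X] [NormedSpace ℝ X]
    (h : ∀ T : X →L[ℝ] ellInfty, IsDPcc T → IsWeaklyCompactOp T) :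
    HasLDPProperty X := by
  intro A hA
  refine isCompact_closure_of_forall_ultrafilter_le_nhds fun U hU => ?_
  let e := toWeakSpace ℝ (X →L[ℝ] ℝ)
  have hAU : A ∈ U.map e.symm := by
    rwa [Ultrafilter.mem_map, ← e.image_eq_preimage_symm]
  obtain ⟨C, hC⟩ := hA.1.exists_norm_le
  obtain ⟨g, hg⟩ := exists_forall_tendsto_apply_of_eventually_norm_le _ id (mem_of_superset hAU hC)
  refine ⟨e g, ?_⟩
  have hUg := tendsto_toWeakSpace_iff.2 (tendsto_bidual_of_isLDPSet h hA hAU hg)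
  simp only [Ultrafilter.coe_map, tendsto_map'_iff, Function.comp_def] at hUg
  exact tendsto_id'.1 hUg

theorem stmt10 {X : Type*} [NormedAddCommGroup X] [NormedSpace ℝ X] [CompleteSpace X]
    (h : ∀ T : X →L[ℝ] ellInfty, IsDPcc T → IsWeaklyCompactOp T) :
    HasLDPProperty X :=
  stmt10_general h
end
end

section
/- Let (f_n) be a bounded sequence in the dual X' of a Banach space X that forms an L-Dunford-Pettis set. Then the operator T: X → ℓ∞ defined by T(x) = (f_n(x))_n is Dunford-Pettis completely continuous. -/
open Filter Topology Metric

noncomputable section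

theorem stmt11 {X : Type*} [NormedAddCommGroup X] [NormedSpace ℝ X] [CompleteSpace X]
    (f : ℕ → X →L[ℝ] ℝ) (hf : IsLDPSet (Set.range f))
    (T : X →L[ℝ] ellInfty) (hT : ∀ (x : X) (n : ℕ), (T x : ℕ → ℝ) n = f n x) :
    IsDPcc T := by
  intro x hx hDP
  obtain ⟨C, hC⟩ := hf.1.exists_norm_le
  have hS := hf.2 x hx hDP
  refine squeeze_zero (fun m => norm_nonneg _) (fun m => ?_) hS
  have hbdd : BddAbove (Set.range fun g : Set.range f => |(g : X →L[ℝ] ℝ) (x m)|) := by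
    refine ⟨C * ‖x m‖, ?_⟩
    rintro r ⟨g, rfl⟩
    calc |(g : X →L[ℝ] ℝ) (x m)| ≤ ‖(g : X →L[ℝ] ℝ)‖ * ‖x m‖ := by
          simpa using (g : X →L[ℝ] ℝ).le_opNorm (x m)
      _ ≤ C * ‖x m‖ := by
          exact mul_le_mul_of_nonneg_right (hC _ g.2) (norm_nonneg _)
  have hmem : ∀ n : ℕ, |f n (x m)| ≤ ⨆ g : Set.range f, |(g : X →L[ℝ] ℝ) (x m)| := by
    intro n
    exact le_ciSup hbdd ⟨f n, ⟨n, rfl⟩⟩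
  have hpos : 0 ≤ ⨆ g : Set.range f, |(g : X →L[ℝ] ℝ) (x m)| :=
    le_trans (abs_nonneg _) (hmem 0)
  refine lp.norm_le_of_forall_le hpos fun n => ?_
  rw [show ‖(T (x m) : ℕ → ℝ) n‖ = |f n (x m)| by rw [hT]; exact Real.norm_eq_abs _]
  exact hmem n
end
end

section
/- A Banach space with the relatively compact Dunford-Pettis property has the L-Dunford-Pettis property if and only if it is reflexive. -/
open Filter Topology Metric

noncomputable section

/-! Under the DPrcP, a weakly null sequence forming a Dunford-Pettis set has relatively compact
range, hence is norm null; so every bounded subset of `X'` is an L-Dunford-Pettis set, and the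
L-Dunford-Pettis property says precisely that bounded subsets of `X'` are relatively weakly
compact. If `X` is reflexive, the weak and weak* topologies of `X'` agree and Banach-Alaoglu
applies. Conversely, if the unit ball of `X'` is relatively weakly compact, a weak* Hahn-Banach
separation in `X'''` shows that `X'` is reflexive, and a Banach space with reflexive dual is
reflexive. -/

open Function NormedSpace

instance WeakDual.instLocallyConvexSpace {E : Type*} [AddCommGroup E] [TopologicalSpace E]
    [Module ℝ E] : LocallyConvexSpace ℝ (WeakDual ℝ E) :=
  WeakBilin.locallyConvexSpace (B := topDualPairing ℝ E)

theorem WeakDual.exists_forall_eq_apply {𝕜 E : Type*} [NontriviallyNormedField 𝕜]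
    [AddCommGroup E] [TopologicalSpace E] [Module 𝕜 E] (φ : StrongDual 𝕜 (WeakDual 𝕜 E)) :
    ∃ x : E, ∀ f, φ f = f x := by
  obtain ⟨x, hx⟩ := (topDualPairing 𝕜 E).dualEmbedding_surjective φ
  exact ⟨x, fun f => by rw [← hx]; rfl⟩

theorem LinearMap.apply_eq_zero_of_forall_smul_lt {E F : Type*} [AddCommGroup E] [Module ℝ E]
    [FunLike F E ℝ] [LinearMapClass F ℝ E ℝ] (f : F) {x : E} {u : ℝ}
    (h : ∀ t : ℝ, f (t • x) < u) : f x = 0 := by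
  by_contra hfx
  have := h (u / f x)
  rw [map_smul, smul_eq_mul, div_mul_cancel₀ _ hfx] at this
  exact this.false

section

variable {X : Type*} [NormedAddCommGroup X] [NormedSpace ℝ X]

theorem ContinuousLinearMap.norm_le_of_forall_norm_le_one_lt {G : StrongDual ℝ X} {u : ℝ}
    (h : ∀ x : X, ‖x‖ ≤ 1 → G x < u) : ‖G‖ ≤ u := by
  have hu : 0 ≤ u := by simpa using (h 0 (by simp)).le
  refine G.opNorm_le_of_unit_norm hu fun x hx => abs_le.mpr ⟨?_, (h x hx.le).le⟩
  exact neg_le.mp (by simpa using (h (-x) (by simp [hx])).le)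

theorem WeaklyNull.tendsto_zero_of_isCompact_closure_range {x : ℕ → X} (hx : WeaklyNull x)
    (hc : IsCompact (closure (Set.range x))) : Tendsto x atTop (𝓝 0) := by
  refine hc.tendsto_nhds_of_unique_mapClusterPt
    (.of_forall fun n => subset_closure (Set.mem_range_self n)) fun a _ ha => ?_
  refine SeparatingDual.eq_zero_of_forall_dual_eq_zero (R := ℝ) fun f => ?_
  have hfa : ClusterPt (f a) (𝓝 0) :=
    ClusterPt.mono (ha.continuousAt_comp f.continuous.continuousAt) (hx f)
  by_contra hne
  exact clusterPt_iff_not_disjoint.mp hfa (disjoint_nhds_nhds.mpr hne)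

theorem HasDPrcP.isLDPSet_of_isBounded (hX : HasDPrcP X) {A : Set (StrongDual ℝ X)}
    (hA : Bornology.IsBounded A) : IsLDPSet A := by
  refine ⟨hA, fun x hx hdp => ?_⟩
  obtain ⟨C, hC, hAC⟩ := hA.exists_pos_norm_le
  have hxn : Tendsto (fun n => ‖x n‖) atTop (𝓝 0) :=
    tendsto_zero_iff_norm_tendsto_zero.mp (hx.tendsto_zero_of_isCompact_closure_range (hX _ hdp))
  refine squeeze_zero (g := fun n => C * ‖x n‖) (fun n => Real.iSup_nonneg fun f => abs_nonneg _)
    (fun n => Real.iSup_le (fun f => ?_) (by positivity)) (by simpa using hxn.const_mul C)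
  calc |(f : StrongDual ℝ X) (x n)| ≤ ‖(f : StrongDual ℝ X)‖ * ‖x n‖ := f.1.le_opNorm _
    _ ≤ C * ‖x n‖ := by gcongr; exact hAC f f.2

theorem continuous_toWeakSpace_toStrongDual_of_surjective
    (hs : Surjective (inclusionInDoubleDual ℝ X)) :
    Continuous fun f : WeakDual ℝ X => toWeakSpace ℝ (StrongDual ℝ X) f.toStrongDual := by
  refine WeakBilin.continuous_of_continuous_eval _ fun Φ => ?_
  obtain ⟨x, rfl⟩ := hs Φ
  exact WeakDual.eval_continuous x

theorem relWeaklyCompact_of_isBounded_of_surjective (hs : Surjective (inclusionInDoubleDual ℝ X))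
    {A : Set (StrongDual ℝ X)} (hA : Bornology.IsBounded A) : RelWeaklyCompact A := by
  obtain ⟨r, hAr⟩ := hA.subset_closedBall 0
  have hK := (WeakDual.isCompact_closedBall (𝕜 := ℝ) (E := X) 0 r).image
    (continuous_toWeakSpace_toStrongDual_of_surjective hs)
  refine hK.of_isClosed_subset isClosed_closure (closure_minimal ?_ hK.isClosed)
  rintro - ⟨f, hf, rfl⟩
  exact ⟨f, hAr hf, rfl⟩

-- The nontrivial inclusion of Goldstine's theorem.
theorem closedBall_bidual_subset_of_convex_of_isClosed {C : Set (WeakDual ℝ (StrongDual ℝ X))}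
    (hconv : Convex ℝ C) (hC : IsClosed C)
    (hball : inclusionInDoubleDual ℝ X '' closedBall 0 1 ⊆ StrongDual.toWeakDual ⁻¹' C) :
    closedBall (0 : StrongDual ℝ (StrongDual ℝ X)) 1 ⊆ StrongDual.toWeakDual ⁻¹' C := by
  intro Φ hΦ
  by_contra hΦC
  obtain ⟨φ, u, hlt, hgt⟩ :=
    geometric_hahn_banach_closed_point (x := StrongDual.toWeakDual Φ) hconv hC hΦC
  obtain ⟨G, hG⟩ := WeakDual.exists_forall_eq_apply φ
  have hGu : ‖G‖ ≤ u := ContinuousLinearMap.norm_le_of_forall_norm_le_one_lt fun x hx => by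
    have := hlt (StrongDual.toWeakDual (inclusionInDoubleDual ℝ X x))
      (hball ⟨x, mem_closedBall_zero_iff.mpr hx, rfl⟩)
    rwa [hG] at this
  have : Φ G ≤ u := calc
    Φ G ≤ ‖Φ‖ * ‖G‖ := (le_abs_self _).trans (Φ.le_opNorm G)
    _ ≤ 1 * u := mul_le_mul (mem_closedBall_zero_iff (a := Φ) |>.mp hΦ) hGu (norm_nonneg _)
      zero_le_one
    _ = u := one_mul u
  rw [hG] at hgt
  exact this.not_gt hgt

theorem surjective_inclusionInDoubleDual_of_relWeaklyCompact_closedBall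
    (hc : RelWeaklyCompact (closedBall (0 : X) 1)) : Surjective (inclusionInDoubleDual ℝ X) := by
  have hK : Convex ℝ (closure (toWeakSpace ℝ X '' closedBall 0 1)) :=
    ((convex_closedBall (0 : X) 1).linear_image (toWeakSpace ℝ X).toLinearMap).closure
  have hC := hc.image (inclusionInDoubleDualWeak ℝ X).continuous
  have hball := closedBall_bidual_subset_of_convex_of_isClosed
    (hK.linear_image (inclusionInDoubleDualWeak ℝ X).toLinearMap) hC.isClosed
    (by rintro _ ⟨x, hx, rfl⟩; exact ⟨toWeakSpace ℝ X x, subset_closure ⟨x, hx, rfl⟩, rfl⟩)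
  have hrange : closedBall (0 : StrongDual ℝ (StrongDual ℝ X)) 1 ⊆
      Set.range (inclusionInDoubleDual ℝ X) := by
    intro Φ hΦ
    obtain ⟨y, -, hy⟩ := hball hΦ
    exact ⟨(toWeakSpace ℝ X).symm y, hy⟩
  have h0 : closedBall (0 : StrongDual ℝ (StrongDual ℝ X)) 1 ∈ 𝓝 0 :=
    closedBall_mem_nhds (0 : StrongDual ℝ (StrongDual ℝ X)) one_pos
  exact LinearMap.range_eq_top.mp (Submodule.eq_top_of_nonempty_interior'
    (LinearMap.range (inclusionInDoubleDual ℝ X).toLinearMap)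
    ⟨0, mem_interior_iff_mem_nhds.2 (mem_of_superset h0 hrange)⟩)

theorem surjective_inclusionInDoubleDual_of_surjective_dual [CompleteSpace X]
    (hs : Surjective (inclusionInDoubleDual ℝ (StrongDual ℝ X))) :
    Surjective (inclusionInDoubleDual ℝ X) := by
  intro Φ
  by_contra hΦ
  have hJ : Isometry (inclusionInDoubleDual ℝ X) := (inclusionInDoubleDualLi ℝ).isometry
  have hconv : Convex ℝ (Set.range (inclusionInDoubleDual ℝ X)) :=
    Set.image_univ (f := inclusionInDoubleDual ℝ X) ▸
      convex_univ.linear_image (inclusionInDoubleDual ℝ X).toLinearMap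
  obtain ⟨f, u, hlt, hgt⟩ := geometric_hahn_banach_closed_point (x := Φ) hconv
    hJ.isClosedEmbedding.isClosed_range (by simpa using hΦ)
  obtain ⟨g, rfl⟩ := hs f
  have hg : g = 0 := ContinuousLinearMap.ext fun x =>
    LinearMap.apply_eq_zero_of_forall_smul_lt g fun t => hlt _ ⟨t • x, rfl⟩
  have hu : 0 < u := by simpa using hlt 0 ⟨0, map_zero _⟩
  have hu' : u < 0 := by simpa [hg] using hgt
  linarith

end

theorem stmt14 {X : Type*} [NormedAddCommGroup X] [NormedSpace ℝ X] [CompleteSpace X]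
    (hX : HasDPrcP X) :
    HasLDPProperty X ↔ Function.Surjective (NormedSpace.inclusionInDoubleDual ℝ X) := by
  refine ⟨fun hL => ?_, fun hs A hA => relWeaklyCompact_of_isBounded_of_surjective hs hA.1⟩
  have hball : RelWeaklyCompact (closedBall (0 : StrongDual ℝ X) 1) :=
    hL _ (hX.isLDPSet_of_isBounded isBounded_closedBall)
  exact surjective_inclusionInDoubleDual_of_surjective_dual
    (surjective_inclusionInDoubleDual_of_relWeaklyCompact_closedBall hball)
end
end

section
/- The Banach space ℓ¹ does not have the L-Dunford-Pettis property. -/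
open Filter Topology Metric

noncomputable section

/-!
The partial-sum functionals `Pₙ y = ∑_{i<n} yᵢ` on `ℓ¹` witness the failure.

They are not relatively weakly compact: a weak cluster point `f` of `(Pₙ)` takes the value `1`
on every unit vector, yet every `Pₙ` lies in the set of functionals that tend to `0` along the
unit vectors, which is norm-closed and convex, hence weakly closed, so it contains `f` too.

They form an L-Dunford–Pettis set: if a weakly null Dunford–Pettis sequence `(x_k)` did not
converge to `0` uniformly on them, a gliding hump would give blocks
`P_{N (j+1)} - P_{N j}` and indices `K j` with `ε / 2 ≤ |(P_{N (j+1)} - P_{N j}) (x (K j))|`.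
Disjointly supported blocks have signed sums of norm at most `1` in `(ℓ¹)'`, so they are weakly
null, and the Dunford–Pettis property of `{x_k}` makes them tend to `0` uniformly on it.
-/

open Function

theorem weaklyNull_of_norm_sum_smul_le {E : Type*} [NormedAddCommGroup E] [NormedSpace ℝ E]
    {v : ℕ → E} {M : ℝ}
    (hv : ∀ (J : ℕ) (c : ℕ → ℝ), (∀ j, |c j| ≤ 1) → ‖∑ j ∈ Finset.range J, c j • v j‖ ≤ M) :
    WeaklyNull v := by
  intro φ
  have hpartial (J : ℕ) : ∑ j ∈ Finset.range J, |φ (v j)| ≤ ‖φ‖ * M := by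
    let c : ℕ → ℝ := fun j => SignType.sign (φ (v j))
    calc ∑ j ∈ Finset.range J, |φ (v j)| = φ (∑ j ∈ Finset.range J, c j • v j) := by
          simp [c, map_sum, sign_mul_self]
      _ ≤ ‖φ‖ * ‖∑ j ∈ Finset.range J, c j • v j‖ := (le_abs_self _).trans (φ.le_opNorm _)
      _ ≤ ‖φ‖ * M := by
          gcongr
          refine hv J c fun j => ?_
          simp only [c]
          cases SignType.sign (φ (v j)) <;> simp
  have hsum : Summable fun j => |φ (v j)| :=
    summable_of_sum_range_le (fun _ => abs_nonneg _) hpartial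
  exact (tendsto_zero_iff_abs_tendsto_zero _).2 hsum.tendsto_atTop_zero

theorem IsDPSet.eventually_forall_abs_lt {X : Type*} [NormedAddCommGroup X] [NormedSpace ℝ X]
    {A : Set X} (hA : IsDPSet A) {f : ℕ → X →L[ℝ] ℝ} (hf : WeaklyNull f) {ε : ℝ} (hε : 0 < ε) :
    ∀ᶠ j in atTop, ∀ a ∈ A, |f j a| < ε := by
  obtain ⟨C, hC⟩ := isBounded_iff_forall_norm_le.1 hA.1
  filter_upwards [(hA.2 f hf).eventually (gt_mem_nhds hε)] with j hj a ha
  have hbdd : BddAbove (Set.range fun a : A => |f j a|) := by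
    refine ⟨‖f j‖ * C, ?_⟩
    rintro _ ⟨a, rfl⟩
    exact (f j).le_opNorm_of_le (hC a a.2)
  exact (le_ciSup hbdd ⟨a, ha⟩).trans_lt hj

theorem tendsto_iSup_abs_of_eventually_forall_abs_le {ι : Type*} [Nonempty ι] {u : ℕ → ι → ℝ}
    (h : ∀ ε > 0, ∀ᶠ k in atTop, ∀ i, |u k i| ≤ ε) :
    Tendsto (fun k => ⨆ i, |u k i|) atTop (𝓝 0) := by
  refine tendsto_order.2 ⟨fun a ha => ?_, fun ε hε => ?_⟩
  · exact Eventually.of_forall fun k =>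
      ha.trans_le (Real.iSup_nonneg fun i => abs_nonneg _)
  · filter_upwards [h (ε / 2) (half_pos hε)] with k hk
    exact (ciSup_le hk).trans_lt (half_lt_self hε)

theorem exists_strictMono_abs_sub_ge {g : ℕ → ℕ → ℝ} (hg : ∀ n, Tendsto (g n) atTop (𝓝 0))
    {ε : ℝ} (hε : 0 < ε) (hfreq : ∃ᶠ k in atTop, ∃ n, ε < |g n k|) :
    ∃ N K : ℕ → ℕ, StrictMono N ∧ ∀ j, ε / 2 ≤ |g (N (j + 1)) (K j) - g (N j) (K j)| := by
  have step (m : ℕ) : ∃ n k, m < n ∧ ε / 2 ≤ |g n k - g m k| := by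
    have hsmall : ∀ᶠ k in atTop, ∀ q ∈ Finset.range (m + 1), |g q k| < ε / 2 :=
      (eventually_all_finset _).2 fun q _ =>
        (tendsto_zero_iff_abs_tendsto_zero _).1 (hg q) |>.eventually (gt_mem_nhds (half_pos hε))
    obtain ⟨k, ⟨n, hn⟩, hk⟩ := (hfreq.and_eventually hsmall).exists
    have hmn : m < n := by
      by_contra! hnm
      linarith [hk n (Finset.mem_range.2 (Nat.lt_succ_of_le hnm))]
    refine ⟨n, k, hmn, ?_⟩
    linarith [hk m (Finset.mem_range.2 m.lt_succ_self), abs_sub_abs_le_abs_sub (g n k) (g m k)]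
  choose next K hlt hge using step
  refine ⟨fun j => next^[j] 0, fun j => K (next^[j] 0), ?_, fun j => ?_⟩
  · exact strictMono_nat_of_lt_succ fun j => by
      simpa only [iterate_succ_apply'] using hlt _
  · simpa only [iterate_succ_apply'] using hge _

section SetOfTendstoApplyZero

variable {E : Type*} [NormedAddCommGroup E] [NormedSpace ℝ E]

theorem convex_setOf_tendsto_apply_zero (v : ℕ → E) :
    Convex ℝ {f : E →L[ℝ] ℝ | Tendsto (fun i => f (v i)) atTop (𝓝 0)} := by
  intro f hf g hg a b _ _ _
  simpa using (hf.const_mul a).add (hg.const_mul b)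

theorem isClosed_setOf_tendsto_apply_zero {v : ℕ → E} (hv : Bornology.IsBounded (Set.range v)) :
    IsClosed {f : E →L[ℝ] ℝ | Tendsto (fun i => f (v i)) atTop (𝓝 0)} := by
  obtain ⟨C, hC⟩ := isBounded_iff_forall_norm_le.1 hv
  have hbound : ∃ C, ∀ i (f : E →L[ℝ] ℝ), ‖ContinuousLinearMap.apply ℝ ℝ (v i) f‖ ≤ C * ‖f‖ :=
    ⟨C, fun i f => by simpa [mul_comm] using f.le_opNorm_of_le (hC _ ⟨i, rfl⟩)⟩
  have hequi : Equicontinuous fun i (f : E →L[ℝ] ℝ) => f (v i) :=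
    ((NormedSpace.equicontinuous_TFAE fun i => ContinuousLinearMap.apply ℝ ℝ (v i)).out 3 1).mp
      hbound
  exact hequi.isClosed_setOfPred_tendsto continuous_const

theorem isClosed_toWeakSpace_image_setOf_tendsto_apply_zero {v : ℕ → E}
    (hv : Bornology.IsBounded (Set.range v)) :
    IsClosed (toWeakSpace ℝ (E →L[ℝ] ℝ) ''
      {f : E →L[ℝ] ℝ | Tendsto (fun i => f (v i)) atTop (𝓝 0)}) := by
  rw [← (isClosed_setOf_tendsto_apply_zero hv).closure_eq,
    (convex_setOf_tendsto_apply_zero v).toWeakSpace_closure ℝ]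
  exact isClosed_closure

end SetOfTendstoApplyZero

local notation "ℓ¹" => lp (fun _ : ℕ => ℝ) 1

namespace lp

theorem sum_abs_le_norm_one (y : ℓ¹) (s : Finset ℕ) : ∑ i ∈ s, |y i| ≤ ‖y‖ := by
  have hy : HasSum (fun i => |y i|) ‖y‖ := by
    simpa [Real.rpow_one] using lp.hasSum_norm (p := 1) (by norm_num) y
  exact sum_le_hasSum s (fun i _ => abs_nonneg _) hy

def sumOn (s : Finset ℕ) : ℓ¹ →L[ℝ] ℝ := ∑ i ∈ s, lp.evalCLM ℝ (fun _ : ℕ => ℝ) 1 i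

@[simp]
theorem sumOn_apply (s : Finset ℕ) (y : ℓ¹) : sumOn s y = ∑ i ∈ s, y i := by
  simp only [sumOn, sum_apply]
  rfl

theorem norm_sumOn_le (s : Finset ℕ) : ‖sumOn s‖ ≤ 1 :=
  ContinuousLinearMap.opNorm_le_bound _ zero_le_one fun y => by
    rw [sumOn_apply, one_mul, Real.norm_eq_abs]
    exact (Finset.abs_sum_le_sum_abs _ _).trans (sum_abs_le_norm_one y s)

theorem norm_sum_smul_sumOn_le {ι : Type*} {t : Finset ι} {s : ι → Finset ℕ}
    (hs : (t : Set ι).PairwiseDisjoint s) {c : ι → ℝ} (hc : ∀ j, |c j| ≤ 1) :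
    ‖∑ j ∈ t, c j • sumOn (s j)‖ ≤ 1 := by
  refine ContinuousLinearMap.opNorm_le_bound _ zero_le_one fun y => ?_
  rw [one_mul, Real.norm_eq_abs, sum_apply]
  calc |∑ j ∈ t, (c j • sumOn (s j)) y| ≤ ∑ j ∈ t, ∑ i ∈ s j, |y i| := by
        refine (Finset.abs_sum_le_sum_abs _ _).trans (Finset.sum_le_sum fun j _ => ?_)
        rw [smul_apply, sumOn_apply, smul_eq_mul, abs_mul]
        exact (mul_le_of_le_one_left (abs_nonneg _) (hc j)).trans (Finset.abs_sum_le_sum_abs _ _)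
    _ = ∑ i ∈ t.biUnion s, |y i| := (Finset.sum_biUnion hs).symm
    _ ≤ ‖y‖ := sum_abs_le_norm_one y _

theorem weaklyNull_sumOn {s : ℕ → Finset ℕ} (hs : Pairwise (Disjoint on s)) :
    WeaklyNull fun j => sumOn (s j) :=
  weaklyNull_of_norm_sum_smul_le fun _ _ hc => norm_sum_smul_sumOn_le (hs.set_pairwise _) hc

theorem sumOn_range_sub_sumOn_range {m n : ℕ} (h : m ≤ n) :
    sumOn (Finset.range n) - sumOn (Finset.range m) = sumOn (Finset.Ico m n) := by
  ext y
  simp [Finset.sum_Ico_eq_sub _ h]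

theorem tendsto_sumOn_range_apply_single (n : ℕ) :
    Tendsto (fun i => sumOn (Finset.range n) (lp.single 1 i 1)) atTop (𝓝 0) :=
  tendsto_const_nhds.congr' <| (eventually_ge_atTop n).mono fun i hi => by simp [hi]

end lp

open lp

theorem isLDPSet_range_sumOn_range : IsLDPSet (Set.range fun n => sumOn (Finset.range n)) := by
  refine ⟨isBounded_iff_forall_norm_le.2 ⟨1, by rintro _ ⟨n, rfl⟩; exact norm_sumOn_le _⟩,
    fun x hx hDP => ?_⟩
  refine tendsto_iSup_abs_of_eventually_forall_abs_le fun ε hε => ?_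
  suffices key : ∀ᶠ k in atTop, ∀ n, |sumOn (Finset.range n) (x k)| ≤ ε by
    filter_upwards [key] with k hk
    rintro ⟨_, n, rfl⟩
    exact hk n
  by_contra hfreq
  simp only [not_eventually, not_forall, not_le] at hfreq
  obtain ⟨N, K, hN, hK⟩ :=
    exists_strictMono_abs_sub_ge (g := fun n k => sumOn (Finset.range n) (x k))
      (fun n => hx _) hε hfreq
  have hdisj : Pairwise (Disjoint on fun j => Finset.Ico (N j) (N (j + 1))) := fun i j hij => by
    simpa [← Finset.disjoint_coe, onFun] using hN.monotone.pairwise_disjoint_on_Ico_succ hij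
  obtain ⟨j, hj⟩ := (hDP.eventually_forall_abs_lt (weaklyNull_sumOn hdisj) (half_pos hε)).exists
  have hblock := hj (x (K j)) ⟨K j, rfl⟩
  rw [← sumOn_range_sub_sumOn_range (hN.monotone (Nat.le_succ j)), sub_apply] at hblock
  linarith [hK j]

theorem not_relWeaklyCompact_range_sumOn_range :
    ¬ RelWeaklyCompact (Set.range fun n => sumOn (Finset.range n)) := by
  intro hK
  set W := toWeakSpace ℝ (ℓ¹ →L[ℝ] ℝ)
  set e : ℕ → ℓ¹ := fun i => lp.single 1 i 1
  obtain ⟨p, -, hp⟩ := hK.exists_mapClusterPt_of_frequently (l := atTop)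
    (f := fun n => W (sumOn (Finset.range n)))
    (Frequently.of_forall fun n => subset_closure ⟨_, ⟨n, rfl⟩, rfl⟩)
  have he : Bornology.IsBounded (Set.range e) :=
    isBounded_iff_forall_norm_le.2 ⟨1, by rintro _ ⟨i, rfl⟩; simp [e, lp.norm_single]⟩
  obtain ⟨f, hf, rfl⟩ :=
    (isClosed_toWeakSpace_image_setOf_tendsto_apply_zero he).mem_of_mapClusterPt hp
      (Eventually.of_forall fun n => ⟨_, tendsto_sumOn_range_apply_single n, rfl⟩)
  have hf_one (i : ℕ) : f (e i) = 1 := by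
    have hC : IsClosed {w | W.symm w (e i) = 1} := isClosed_eq
      (WeakBilin.eval_continuous (topDualPairing ℝ _).flip (ContinuousLinearMap.apply ℝ ℝ (e i)))
      continuous_const
    simpa [W] using hC.mem_of_mapClusterPt hp
      ((eventually_gt_atTop i).mono fun n hn => by simp [e, hn])
  replace hf : Tendsto (fun i => f (e i)) atTop (𝓝 0) := hf
  simp only [hf_one] at hf
  exact one_ne_zero (tendsto_nhds_unique tendsto_const_nhds hf)

theorem stmt15 : ¬ HasLDPProperty (lp (fun _ : ℕ => ℝ) 1) := fun h =>
  not_relWeaklyCompact_range_sumOn_range (h _ isLDPSet_range_sumOn_range)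
end
end

section
/- If a Banach space X has the L-Dunford-Pettis property, then every complemented closed subspace of X has the L-Dunford-Pettis property. -/
open Filter Topology Metric

noncomputable section

/-!
If `R ∘ S = id` for operators `R : X → Y` and `S : Y → X`, the adjoint `R*` carries
L-Dunford-Pettis sets of `Y'` to L-Dunford-Pettis sets of `X'`, because `R` maps weakly null
Dunford-Pettis sequences of `X` to weakly null Dunford-Pettis sequences of `Y`. An
L-Dunford-Pettis set `A ⊆ Y'` is then the image `S* (R* A)` of a relatively weakly compact set
under the weak-weak continuous map `S*`. A complemented subspace is such a retract, with `R` the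
projection and `S` the inclusion.
-/

lemma iSup_image_subtype {α β γ : Type*} [SupSet γ] (f : α → β) (s : Set α) (g : β → γ) :
    ⨆ y : f '' s, g y = ⨆ x : s, g (f x) :=
  (Set.imageFactorization_surjective.iSup_comp (g ∘ Subtype.val)).symm

section Operators

variable {X Y : Type*} [NormedAddCommGroup X] [NormedSpace ℝ X]
  [NormedAddCommGroup Y] [NormedSpace ℝ Y]

lemma WeaklyNull.map {x : ℕ → X} (hx : WeaklyNull x) (T : X →L[ℝ] Y) :
    WeaklyNull fun n => T (x n) :=
  fun f => hx (f.comp T)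

lemma IsDPSet.image {A : Set X} (hA : IsDPSet A) (T : X →L[ℝ] Y) : IsDPSet (T '' A) := by
  refine ⟨T.lipschitz.isBounded_image hA.1, fun f hf => ?_⟩
  refine (hA.2 _ (hf.map (ContinuousLinearMap.precomp ℝ T))).congr fun n => ?_
  exact (iSup_image_subtype T A fun y => |f n y|).symm

lemma IsLDPSet.image_precomp {A : Set (Y →L[ℝ] ℝ)} (hA : IsLDPSet A) (T : X →L[ℝ] Y) :
    IsLDPSet (ContinuousLinearMap.precomp ℝ T '' A) := by
  refine ⟨(ContinuousLinearMap.precomp ℝ T).lipschitz.isBounded_image hA.1,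
    fun x hx hDP => ?_⟩
  have hTx : IsDPSet (Set.range fun n => T (x n)) := by
    simpa only [← Set.range_comp'] using hDP.image T
  refine (hA.2 _ (hx.map T) hTx).congr fun n => ?_
  exact (iSup_image_subtype (ContinuousLinearMap.precomp ℝ T) A fun g => |g (x n)|).symm

lemma RelWeaklyCompact.image {A : Set X} (hA : RelWeaklyCompact A) (T : X →L[ℝ] Y) :
    RelWeaklyCompact (T '' A) := by
  have hK := IsCompact.image hA (WeakSpace.map T).continuous
  refine hK.of_isClosed_subset isClosed_closure (closure_minimal ?_ hK.isClosed)
  rintro - ⟨-, ⟨a, ha, rfl⟩, rfl⟩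
  exact ⟨toWeakSpace ℝ X a, subset_closure ⟨a, ha, rfl⟩, rfl⟩

theorem HasLDPProperty.of_retraction (hX : HasLDPProperty X) (R : X →L[ℝ] Y)
    (S : Y →L[ℝ] X) (hRS : ∀ y, R (S y) = y) : HasLDPProperty Y := by
  intro A hA
  have hRSA := (hX _ (hA.image_precomp R)).image (ContinuousLinearMap.precomp ℝ S)
  have hid : ∀ g : Y →L[ℝ] ℝ, (g.comp R).comp S = g := fun g => by ext y; simp [hRS]
  simpa only [Set.image_image, ContinuousLinearMap.precomp_apply, hid, Set.image_id'] using hRSA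

end Operators

theorem stmt16_general {X : Type*} [NormedAddCommGroup X] [NormedSpace ℝ X]
    (hX : HasLDPProperty X) (X₁ : Submodule ℝ X)
    (hcompl : ∃ P : X →L[ℝ] X, LinearMap.range (P : X →ₗ[ℝ] X) = X₁ ∧ ∀ x ∈ X₁, P x = x) :
    HasLDPProperty X₁ := by
  obtain ⟨P, hPrange, hPid⟩ := hcompl
  have hPmem : ∀ x, P x ∈ X₁ := fun x => hPrange ▸ LinearMap.mem_range_self _ x
  exact hX.of_retraction (P.codRestrict X₁ hPmem) X₁.subtypeL
    fun y => Subtype.ext (hPid y y.2)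

theorem stmt16 {X : Type*} [NormedAddCommGroup X] [NormedSpace ℝ X] [CompleteSpace X]
    (hX : HasLDPProperty X) (X₁ : Submodule ℝ X) (hcl : IsClosed (X₁ : Set X))
    (hcompl : ∃ P : X →L[ℝ] X, LinearMap.range (P : X →ₗ[ℝ] X) = X₁ ∧ ∀ x ∈ X₁, P x = x) :
    HasLDPProperty X₁ :=
  stmt16_general hX X₁ hcompl
end
end

section
/- Let X be a separable Banach space and φ: ℓ∞ → L(X, ℓ∞) a bounded linear operator with φ(e_n) = 0 for all n, where e_n are the standard unit vectors. Then there is an infinite subset M of ℕ such that φ(α) = 0 for every α ∈ ℓ∞(M), where ℓ∞(M) is the set of bounded sequences supported on M. -/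
open Filter Topology Metric

noncomputable section

/-- Almost disjoint family of infinite subsets of ℕ indexed by `ℕ → Bool`:
branches of the binary tree, encoded as naturals. -/
def adF (x : ℕ → Bool) : Set ℕ :=
  Set.range fun n => Encodable.encode (List.ofFn fun i : Fin n => x i)

lemma adF_injective (x : ℕ → Bool) :
    Function.Injective fun n => Encodable.encode (List.ofFn fun i : Fin n => x i) := by
  intro a b hab
  have h := Encodable.encode_injective hab
  have := congrArg List.length h
  simpa using this

lemma adF_infinite (x : ℕ → Bool) : (adF x).Infinite :=
  Set.infinite_range_of_injective (adF_injective x)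

lemma adF_almost_disjoint {x y : ℕ → Bool} (hxy : x ≠ y) :
    (adF x ∩ adF y).Finite := by
  obtain ⟨N, hN⟩ : ∃ N, x N ≠ y N := by
    by_contra h; push_neg at h; exact hxy (funext h)
  apply Set.Finite.subset
    (Set.Finite.image (fun n => Encodable.encode (List.ofFn fun i : Fin n => x i))
      (Set.finite_Iic N))
  rintro m ⟨⟨a, rfl⟩, ⟨b, hb⟩⟩
  have h := Encodable.encode_injective hb
  have hlen : b = a := by simpa using congrArg List.length h
  subst hlen
  refine Set.mem_image_of_mem _ ?_
  simp only [Set.mem_Iic]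
  by_contra hab
  push_neg at hab
  apply hN
  have := congrFun (List.ofFn_injective h.symm) ⟨N, hab⟩
  simpa using this

instance : Uncountable (ℕ → Bool) := by
  rw [← not_countable_iff]
  intro h
  obtain ⟨f, hf⟩ := countable_iff_exists_injective (ℕ → Bool) |>.mp h
  classical
  have hg : Function.Injective fun s : Set ℕ => f fun n => decide (n ∈ s) := by
    intro s t hst
    have := hf hst
    ext n
    have := congrFun this n
    simpa using this
  exact Function.cantor_injective _ hg


open Classical in
/-- Replace the coordinates of `α` in the finite set `s` by `0`. -/
def zeroOn (s : Finset ℕ) (α : ellInfty) : ellInfty :=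
  ⟨fun n => if n ∈ s then 0 else (α : ℕ → ℝ) n, by
    apply memℓp_infty
    refine ⟨‖α‖, ?_⟩
    rintro r ⟨n, rfl⟩
    dsimp only
    split_ifs
    · simp only [norm_zero]; exact norm_nonneg α
    · exact lp.norm_apply_le_norm ENNReal.top_ne_zero α n⟩

@[simp] lemma zeroOn_apply (s : Finset ℕ) (α : ellInfty) (n : ℕ) :
    (zeroOn s α : ℕ → ℝ) n = if n ∈ s then 0 else (α : ℕ → ℝ) n := by
  classical
  rfl

lemma zeroOn_norm_le (s : Finset ℕ) (α : ellInfty) : ‖zeroOn s α‖ ≤ ‖α‖ := by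
  apply lp.norm_le_of_forall_le (norm_nonneg α)
  intro n
  rw [zeroOn_apply]
  split_ifs
  · simp only [norm_zero]; exact norm_nonneg α
  · exact lp.norm_apply_le_norm ENNReal.top_ne_zero α n

lemma zeroOn_decomp (s : Finset ℕ) (α : ellInfty) :
    α = zeroOn s α + ∑ n ∈ s, ((α : ℕ → ℝ) n) • lp.single ⊤ n (1 : ℝ) := by
  ext m
  classical
  rw [lp.coeFn_add, Pi.add_apply, zeroOn_apply, lp.coeFn_sum, Finset.sum_apply]
  have hterm : ∀ n ∈ s, (((((α : ℕ → ℝ) n) • (lp.single ⊤ n (1 : ℝ) : ellInfty)) : ellInfty) : ℕ → ℝ) m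
      = if m = n then (α : ℕ → ℝ) n else 0 := by
    intro n _
    rw [lp.coeFn_smul, Pi.smul_apply]
    by_cases h : m = n
    · subst h; rw [lp.single_apply_self]; simp
    · rw [lp.single_apply_ne _ _ _ h]; simp [h]
  rw [Finset.sum_congr rfl hterm]
  by_cases hm : m ∈ s <;> simp [hm, Finset.sum_ite_eq]

lemma map_zeroOn (g : ellInfty →ₗ[ℝ] ℝ) (h0 : ∀ n, g (lp.single ⊤ n (1 : ℝ)) = 0)
    (s : Finset ℕ) (α : ellInfty) : g (zeroOn s α) = g α := by
  conv_rhs => rw [zeroOn_decomp s α]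
  rw [map_add, map_sum]
  simp [h0]

lemma bad_countable (g : ellInfty →ₗ[ℝ] ℝ) (C : ℝ)
    (hg : ∀ α, |g α| ≤ C * ‖α‖) (h0 : ∀ n, g (lp.single ⊤ n (1 : ℝ)) = 0) :
    {x : ℕ → Bool |
      ∃ α : ellInfty, (∀ n ∉ adF x, (α : ℕ → ℝ) n = 0) ∧ g α ≠ 0}.Countable := by
  classical
  set S : ℕ → Set (ℕ → Bool) := fun q =>
    {x | ∃ α : ellInfty, (∀ n ∉ adF x, (α : ℕ → ℝ) n = 0) ∧ ‖α‖ ≤ 1 ∧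
      1 / (q + 1 : ℝ) < |g α|} with hS
  have hsub : {x : ℕ → Bool |
      ∃ α : ellInfty, (∀ n ∉ adF x, (α : ℕ → ℝ) n = 0) ∧ g α ≠ 0} ⊆ ⋃ q, S q := by
    rintro x ⟨α, hα1, hα2⟩
    have hα0 : α ≠ 0 := by rintro rfl; simp at hα2
    have hnorm : 0 < ‖α‖ := norm_pos_iff.mpr hα0
    set β : ellInfty := ‖α‖⁻¹ • α with hβ
    have hβsupp : ∀ n ∉ adF x, (β : ℕ → ℝ) n = 0 := by
      intro n hn
      rw [hβ, lp.coeFn_smul, Pi.smul_apply, hα1 n hn, smul_zero]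
    have hβnorm : ‖β‖ ≤ 1 := by
      rw [hβ, norm_smul, norm_inv, norm_norm, inv_mul_cancel₀ hnorm.ne']
    have hβg : 0 < |g β| := by
      rw [hβ, map_smul]
      simp only [smul_eq_mul, abs_mul, abs_inv, abs_norm]
      positivity
    obtain ⟨q, hq⟩ := exists_nat_gt (1 / |g β|)
    refine Set.mem_iUnion.mpr ⟨q, β, hβsupp, hβnorm, ?_⟩
    rw [div_lt_iff₀ hβg] at hq
    rw [div_lt_iff₀ (by positivity)]
    nlinarith [hβg]
  refine Set.Countable.mono hsub (Set.countable_iUnion fun q => Set.Finite.countable ?_)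
  by_contra hinf
  have hinf : (S q).Infinite := hinf
  obtain ⟨N, hN⟩ := exists_nat_gt (C * (q + 1 : ℝ))
  obtain ⟨t, hts, htcard⟩ := hinf.exists_subset_card_eq (N + 1)
  have hch : ∀ x : {a // a ∈ t}, ∃ α : ellInfty,
      (∀ n ∉ adF x.1, (α : ℕ → ℝ) n = 0) ∧ ‖α‖ ≤ 1 ∧ 1 / (q + 1 : ℝ) < |g α| :=
    fun x => hts x.2
  choose A hA1 hA2 hA3 using hch
  have hFs : (⋃ (x : {a // a ∈ t}), ⋃ (y : {a // a ∈ t}), ⋃ (_ : x.1 ≠ y.1),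
      (adF x.1 ∩ adF y.1)).Finite :=
    Set.finite_iUnion fun x => Set.finite_iUnion fun y =>
      Set.finite_iUnion fun hne => adF_almost_disjoint hne
  set F : Finset ℕ := hFs.toFinset with hF
  set α' : {a // a ∈ t} → ellInfty := fun x => zeroOn F (A x) with hα'
  have hα'zero : ∀ (x : {a // a ∈ t}) (n : ℕ), n ∉ adF x.1 ∨ n ∈ F →
      (α' x : ℕ → ℝ) n = 0 := by
    intro x n hn
    rw [hα']
    rw [zeroOn_apply]
    rcases hn with hn | hn
    · simp [hA1 x n hn]
    · simp [hn]
  have hdisj : ∀ x y : {a // a ∈ t}, x ≠ y → ∀ n : ℕ,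
      (α' x : ℕ → ℝ) n ≠ 0 → (α' y : ℕ → ℝ) n = 0 := by
    intro x y hxy n hx
    have hxy' : x.1 ≠ y.1 := fun h => hxy (Subtype.ext h)
    by_contra hy
    have hnx : n ∈ adF x.1 := by
      by_contra h; exact hx (hα'zero x n (Or.inl h))
    have hny : n ∈ adF y.1 := by
      by_contra h; exact hy (hα'zero y n (Or.inl h))
    have hnF : n ∈ F := by
      rw [hF, Set.Finite.mem_toFinset]
      exact Set.mem_iUnion.mpr ⟨x, Set.mem_iUnion.mpr ⟨y,
        Set.mem_iUnion.mpr ⟨hxy', ⟨hnx, hny⟩⟩⟩⟩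
    exact hx (hα'zero x n (Or.inr hnF))
  set ε : {a // a ∈ t} → ℝ := fun x => if 0 ≤ g (A x) then 1 else -1 with hε
  have hεabs : ∀ x, |ε x| = 1 := by
    intro x; rw [hε]; dsimp only; split_ifs <;> simp
  have hεg : ∀ x, ε x * g (A x) = |g (A x)| := by
    intro x; rw [hε]; dsimp only
    split_ifs with h
    · rw [abs_of_nonneg h, one_mul]
    · rw [abs_of_neg (lt_of_not_ge h)]; ring
  set β : ellInfty := ∑ x : {a // a ∈ t}, ε x • α' x with hβ
  have hgβ : g β = ∑ x : {a // a ∈ t}, |g (A x)| := by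
    rw [hβ, map_sum]
    refine Finset.sum_congr rfl fun x _ => ?_
    rw [map_smul, smul_eq_mul, hα', map_zeroOn g h0, hεg]
  have hβnorm : ‖β‖ ≤ 1 := by
    apply lp.norm_le_of_forall_le zero_le_one
    intro n
    rw [hβ, lp.coeFn_sum, Finset.sum_apply]
    by_cases hx : ∃ x : {a // a ∈ t}, (α' x : ℕ → ℝ) n ≠ 0
    · obtain ⟨x0, hx0⟩ := hx
      rw [Finset.sum_eq_single x0]
      · rw [lp.coeFn_smul, Pi.smul_apply, smul_eq_mul, Real.norm_eq_abs, abs_mul,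
          hεabs, one_mul]
        rw [← Real.norm_eq_abs]
        calc ‖(α' x0 : ℕ → ℝ) n‖ ≤ ‖α' x0‖ :=
              lp.norm_apply_le_norm ENNReal.top_ne_zero (α' x0) n
          _ ≤ ‖A x0‖ := zeroOn_norm_le _ _
          _ ≤ 1 := hA2 x0
      · intro y _ hy
        rw [lp.coeFn_smul, Pi.smul_apply, hdisj x0 y (fun h => hy (h ▸ rfl)) n hx0,
          smul_zero]
      · intro h; exact absurd (Finset.mem_univ x0) h
    · push_neg at hx
      have : ∀ x ∈ (Finset.univ : Finset {a // a ∈ t}),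
          ((ε x • α' x : ellInfty) : ℕ → ℝ) n = 0 := by
        intro x _
        rw [lp.coeFn_smul, Pi.smul_apply, hx x, smul_zero]
      rw [Finset.sum_congr rfl this]
      simp
  have htne : t.Nonempty := Finset.card_pos.mp (by rw [htcard]; exact Nat.succ_pos N)
  haveI hne : Nonempty {a // a ∈ t} := ⟨⟨htne.choose, htne.choose_spec⟩⟩
  have hq1 : (0:ℝ) < (q : ℝ) + 1 := by positivity
  have hlow : ((N + 1 : ℕ) : ℝ) * (1 / ((q : ℝ) + 1)) ≤ g β := by
    rw [hgβ]
    have h := Finset.card_nsmul_le_sum (Finset.univ : Finset {a // a ∈ t})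
      (fun x => |g (A x)|) (1 / ((q : ℝ) + 1)) (fun x _ => (hA3 x).le)
    rw [Finset.card_univ, Fintype.card_coe, htcard, nsmul_eq_mul] at h
    exact_mod_cast h
  have hC : 0 < C := by
    have x0 : {a // a ∈ t} := Classical.arbitrary _
    have h1 := hA3 x0
    have h2 := hg (A x0)
    have h3 := hA2 x0
    have h4 := norm_nonneg (A x0)
    have h5 : 0 < 1 / ((q : ℝ) + 1) := by positivity
    nlinarith
  have hupp : g β ≤ C := by
    calc g β ≤ |g β| := le_abs_self _
      _ ≤ C * ‖β‖ := hg β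
      _ ≤ C * 1 := by nlinarith [norm_nonneg β]
      _ = C := mul_one C
  have hfinal := hlow.trans hupp
  push_cast at hfinal
  have hmul := mul_le_mul_of_nonneg_right hfinal hq1.le
  rw [mul_assoc, one_div, inv_mul_cancel₀ hq1.ne', mul_one] at hmul
  linarith

set_option maxHeartbeats 1000000 in
set_option synthInstance.maxHeartbeats 400000 in
theorem stmt19 {X : Type*} [NormedAddCommGroup X] [NormedSpace ℝ X] [CompleteSpace X]
    [TopologicalSpace.SeparableSpace X]
    (φ : ellInfty →L[ℝ] (X →L[ℝ] ellInfty))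
    (hφ : ∀ n : ℕ, φ (lp.single ⊤ n (1 : ℝ)) = 0) :
    ∃ M : Set ℕ, M.Infinite ∧
      ∀ α : ellInfty, (∀ n ∉ M, (α : ℕ → ℝ) n = 0) → φ α = 0 := by
  classical
  haveI : Nonempty X := ⟨0⟩
  set D : ℕ → X := TopologicalSpace.denseSeq X with hD
  set g : ℕ → ℕ → (ellInfty →ₗ[ℝ] ℝ) := fun k m =>
    { toFun := fun α => (φ α (D k) : ℕ → ℝ) m
      map_add' := by
        intro a b
        simp only [map_add, ContinuousLinearMap.add_apply, lp.coeFn_add, Pi.add_apply]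
      map_smul' := by
        intro c a
        simp only [map_smul, ContinuousLinearMap.smul_apply, lp.coeFn_smul, Pi.smul_apply,
          RingHom.id_apply] } with hgdef
  have hgb : ∀ k m α, |g k m α| ≤ (‖φ‖ * ‖D k‖) * ‖α‖ := by
    intro k m α
    rw [← Real.norm_eq_abs]
    calc ‖(φ α (D k) : ℕ → ℝ) m‖ ≤ ‖φ α (D k)‖ :=
          lp.norm_apply_le_norm ENNReal.top_ne_zero _ m
      _ ≤ ‖φ α‖ * ‖D k‖ := (φ α).le_opNorm _
      _ ≤ (‖φ‖ * ‖α‖) * ‖D k‖ :=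
          mul_le_mul_of_nonneg_right (φ.le_opNorm α) (norm_nonneg _)
      _ = (‖φ‖ * ‖D k‖) * ‖α‖ := by ring
  have hg0 : ∀ k m n, g k m (lp.single ⊤ n (1 : ℝ)) = 0 := by
    intro k m n
    show (φ (lp.single ⊤ n (1 : ℝ)) (D k) : ℕ → ℝ) m = 0
    rw [hφ n]
    simp
  set B : Set (ℕ → Bool) := ⋃ k, ⋃ m,
    {x : ℕ → Bool | ∃ α : ellInfty, (∀ n ∉ adF x, (α : ℕ → ℝ) n = 0) ∧ g k m α ≠ 0}
    with hB
  have hBc : B.Countable :=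
    Set.countable_iUnion fun k => Set.countable_iUnion fun m =>
      bad_countable (g k m) (‖φ‖ * ‖D k‖) (hgb k m) (hg0 k m)
  have hx : ∃ x : ℕ → Bool, x ∉ B := by
    by_contra h
    push_neg at h
    exact Set.not_countable_univ ((Set.eq_univ_of_forall h ▸ hBc))
  obtain ⟨x, hx⟩ := hx
  refine ⟨adF x, adF_infinite x, ?_⟩
  intro α hα
  have hcoord : ∀ k m, (φ α (D k) : ℕ → ℝ) m = 0 := by
    intro k m
    by_contra hne
    exact hx (Set.mem_iUnion.mpr ⟨k, Set.mem_iUnion.mpr ⟨m, ⟨α, hα, hne⟩⟩⟩)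
  have hDk : ∀ k, φ α (D k) = 0 := by
    intro k
    ext m
    simpa using hcoord k m
  have hdense : Dense (Set.range D) := TopologicalSpace.denseRange_denseSeq X
  have hcoe : ⇑(φ α) = ⇑(0 : X →L[ℝ] ellInfty) :=
    Continuous.ext_on hdense (φ α).continuous (0 : X →L[ℝ] ellInfty).continuous
      (by rintro _ ⟨k, rfl⟩; simp [hDk k])
  exact ContinuousLinearMap.ext fun y => congrFun hcoe y
end
end
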